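/- arXiv:2312.12406 — 2 statements merged into one kernel-verified Lean document; each statement's English description precedes it below -/
import Mathlib

section
/- Let (X, 𝒳, μ, T) be an ergodic measure-preserving system with μ non-atomic, let γ ∈ (0,1], and let (𝒫⁽ⁿ⁾)ₙ∈ℕ be a sequence of Kakutani–Rokhlin partitions of (X, 𝒳, μ, T) satisfying (KR1)–(KR4), with d⁽ⁿ⁾ towers at level n. If there exists a sequence (w(n))ₙ∈ℕ of complete words, where w(n) is a complete word over {1,…,d⁽ⁿ⁾}, such that limsup_{n→∞} μ(𝒯⁽ⁿ⁾_{w(n)}) ≥ γ, then (X, 𝒳, μ, T) is γ-rigid. -/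
open MeasureTheory Filter Set

section Rigidity

variable {X : Type*} [MeasurableSpace X]

/-- The system `(X, μ, T)` is `γ`-rigid along the increasing sequence `n` of positive
integers: `liminf_k μ(A ∩ T^{-n_k} A) ≥ γ μ(A)` for every measurable set `A`. -/
def IsPartiallyRigidSeq (μ : Measure X) (T : X → X) (γ : ℝ) (n : ℕ → ℕ) : Prop :=
  StrictMono n ∧ 0 < n 0 ∧
    ∀ A : Set X, MeasurableSet A →
      ENNReal.ofReal γ * μ A ≤ Filter.liminf (fun k => μ (A ∩ T^[n k] ⁻¹' A)) Filter.atTop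

/-- The system `(X, μ, T)` is `γ`-rigid. -/
def IsPartiallyRigid (μ : Measure X) (T : X → X) (γ : ℝ) : Prop :=
  ∃ n : ℕ → ℕ, IsPartiallyRigidSeq μ T γ n

/-- The partial rigidity rate `δ_μ`: the supremum of the constants `γ ∈ (0,1]` for which
the system is `γ`-rigid (`0`, by convention on `sSup ∅`, if the system is not partially
rigid). -/
noncomputable def partialRigidityRate (μ : Measure X) (T : X → X) : ℝ :=
  sSup {γ : ℝ | γ ∈ Set.Ioc (0 : ℝ) 1 ∧ IsPartiallyRigid μ T γ}

end Rigidity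

/-- A word is complete if it has length at least 2 and its first and last letters
coincide. -/
def IsCompleteWord {α : Type*} (w : List α) : Prop :=
  2 ≤ w.length ∧ w.head? = w.getLast?

/-- A Kakutani–Rokhlin partition of `X` for the transformation `T`: towers indexed by
`Fin d`, with measurable bases `B a` and heights `h a`; the floors `T^j(B a)`,
`0 ≤ j < h a`, are pairwise disjoint and cover `X`. -/
structure KRPartition (X : Type*) [MeasurableSpace X] (T : X → X) where
  d : ℕ
  B : Fin d → Set X
  h : Fin d → ℕ
  h_pos : ∀ a, 0 < h a
  meas : ∀ a, MeasurableSet (B a)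
  disj : ∀ (a a' : Fin d) (j j' : ℕ), j < h a → j' < h a' →
    (a, j) ≠ (a', j') → Disjoint (T^[j] '' B a) (T^[j'] '' B a')
  cover : (⋃ a : Fin d, ⋃ j ∈ Finset.range (h a), T^[j] '' B a) = Set.univ

namespace KRPartition

variable {X : Type*} [MeasurableSpace X] {T : X → X}

/-- The base `B = ⋃ₐ Bₐ` of the partition. -/
def base (P : KRPartition X T) : Set X := ⋃ a, P.B a

/-- The tower `𝒯ₐ = ⋃_{0 ≤ j < hₐ} T^j(Bₐ)`. -/
def tower (P : KRPartition X T) (a : Fin P.d) : Set X :=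
  ⋃ j ∈ Finset.range (P.h a), T^[j] '' P.B a

/-- The atoms of the partition are the floors `T^j(Bₐ)`, `0 ≤ j < hₐ`. -/
def IsAtom (P : KRPartition X T) (s : Set X) : Prop :=
  ∃ (a : Fin P.d) (j : ℕ), j < P.h a ∧ s = T^[j] '' P.B a

/-- `B_w` for a word `w`: points `x` with `T^{h_{w₁}+⋯+h_{w_{i-1}}} x ∈ B_{w_i}` for
every `1 ≤ i ≤ |w|`. -/
def wordBase (P : KRPartition X T) (w : List (Fin P.d)) : Set X :=
  {x | ∀ i : Fin w.length, T^[((w.take i).map P.h).sum] x ∈ P.B (w.get i)}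

/-- The subtower `𝒯_w = ⋃_{0 ≤ j < h_{w₁}} T^j(B_w)` generated by the word `w`. -/
def wordTower (P : KRPartition X T) (w : List (Fin P.d)) : Set X :=
  ⋃ j ∈ Finset.range ((w.map P.h).headD 0), T^[j] '' P.wordBase w

/-- The sum `h_{w₁} + ⋯ + h_{w_{ℓ-1}}` of the heights of all but the last letter. -/
def wordSum (P : KRPartition X T) (w : List (Fin P.d)) : ℕ :=
  (w.dropLast.map P.h).sum

/-- The union `𝒯_{[w]} = ⋃_{u ∼ w} 𝒯_u` over all complete words `u` equivalent to
`w` (same sum of heights of all but the last letter). -/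
def classTower (P : KRPartition X T) (w : List (Fin P.d)) : Set X :=
  ⋃ u ∈ {u : List (Fin P.d) | IsCompleteWord u ∧ P.wordSum u = P.wordSum w},
    P.wordTower u

end KRPartition

/-- A sequence of Kakutani–Rokhlin partitions with `𝒫⁽⁰⁾ = {X}` satisfying
(KR1)–(KR4). -/
structure KRSequence (X : Type*) [m : MeasurableSpace X] (μ : Measure X) (T : X → X) where
  P : ℕ → KRPartition X T
  d_zero : (P 0).d = 1
  h_zero : ∀ a, (P 0).h a = 1
  B_zero : ∀ a, (P 0).B a = Set.univ
  kr1 : ∀ n, (P (n + 1)).base ⊆ (P n).base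
  kr2 : ∀ n s, (P (n + 1)).IsAtom s → ∃ t, (P n).IsAtom t ∧ s ⊆ t
  kr3 : Filter.Tendsto (fun n => μ (P n).base) Filter.atTop (nhds 0)
  kr4 : MeasurableSpace.generateFrom {s : Set X | ∃ n, (P n).IsAtom s} = m

open scoped ENNReal symmDiff InnerProductSpace

/-!
Fix a measurable set `A`. By (KR4) it is approximated by a set `A'` that is a union of atoms of
some level `m`. Let `n ≥ m`, let `w` be a complete word at level `n` and `s` the sum of the heights
of all letters of `w` but the last. A point `T^j y` with `y ∈ B_w` returns after `s` steps to
`T^j (T^s y) ∈ T^j B_{w₁}`, the atom it started in, and hence stays in `A'`. So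
`𝒯_w ∩ T^{-i} A' ⊆ T^{-i} (A' ∩ T^{-s} A')` up to the top `i` floors of `𝒯_w`, whose measure is at
most `i μ(B⁽ⁿ⁾)`. Averaging over `i < N`, the mean ergodic theorem
`(1/N) ∑_{i<N} μ(E ∩ T^{-i} A') → μ(E) μ(A')` (uniformly in `E`) gives
`μ(A' ∩ T^{-s} A') ≳ μ(A') μ(𝒯_w)`. Along a subsequence with `μ(𝒯_{w(n)})` close to `γ`, the
return times `s` tend to infinity because `μ(𝒯_w) ≤ s μ(B⁽ⁿ⁾)` and `μ(B⁽ⁿ⁾) → 0`.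
-/

theorem MeasurableEmbedding.iterate {α : Type*} [MeasurableSpace α] {f : α → α}
    (hf : MeasurableEmbedding f) : ∀ n, MeasurableEmbedding f^[n]
  | 0 => .id
  | n + 1 => (hf.iterate n).comp hf

theorem MeasureTheory.MeasurePreserving.measure_image_emb {α β : Type*} [MeasurableSpace α]
    [MeasurableSpace β] {μa : Measure α} {μb : Measure β} {f : α → β}
    (hf : MeasurePreserving f μa μb) (hfe : MeasurableEmbedding f) (s : Set α) :
    μb (f '' s) = μa s := by
  rw [← hf.measure_preimage_emb hfe, preimage_image_eq _ hfe.injective]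

theorem MeasureTheory.MeasurePreserving.measureReal_image_iterate {α : Type*} [MeasurableSpace α]
    {μ : Measure α} {f : α → α} (hf : MeasurePreserving f μ μ) (hfe : MeasurableEmbedding f)
    (n : ℕ) (s : Set α) : μ.real (f^[n] '' s) = μ.real s := by
  rw [measureReal_def, (hf.iterate n).measure_image_emb (hfe.iterate n), measureReal_def]

theorem MeasureTheory.MeasurePreserving.abs_measureReal_inter_preimage_sub_le {α : Type*}
    [MeasurableSpace α] {μ : Measure α} [IsFiniteMeasure μ] {f : α → α}
    (hf : MeasurePreserving f μ μ) {A B : Set α} (hA : MeasurableSet A) (hB : MeasurableSet B) :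
    |μ.real (A ∩ f ⁻¹' A) - μ.real (B ∩ f ⁻¹' B)| ≤ 2 * μ.real (A ∆ B) := by
  have hsub : (A ∩ f ⁻¹' A) ∆ (B ∩ f ⁻¹' B) ⊆ A ∆ B ∪ f ⁻¹' (A ∆ B) := by
    intro x
    simp only [mem_symmDiff, mem_inter_iff, mem_preimage, mem_union]
    tauto
  calc |μ.real (A ∩ f ⁻¹' A) - μ.real (B ∩ f ⁻¹' B)|
      ≤ μ.real ((A ∩ f ⁻¹' A) ∆ (B ∩ f ⁻¹' B)) :=
        abs_measureReal_sub_le_measureReal_symmDiff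
          (hA.inter (hf.measurable hA)).nullMeasurableSet
          (hB.inter (hf.measurable hB)).nullMeasurableSet
    _ ≤ μ.real (A ∆ B) + μ.real (f ⁻¹' (A ∆ B)) :=
        (measureReal_mono hsub).trans (measureReal_union_le _ _)
    _ = 2 * μ.real (A ∆ B) := by
        rw [hf.measureReal_preimage (hA.symmDiff hB).nullMeasurableSet, two_mul]

theorem ENNReal.ofReal_le_liminf_of_forall_eventually {u : ℕ → ℝ≥0∞} {c : ℝ}
    (h : ∀ ε > 0, ∀ᶠ k in atTop, c - ε ≤ (u k).toReal) :
    ENNReal.ofReal c ≤ liminf u atTop := by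
  refine ENNReal.le_of_forall_pos_le_add fun ε hε _ => ?_
  have hliminf : ENNReal.ofReal (c - ε) ≤ liminf u atTop :=
    le_liminf_of_le (by isBoundedDefault)
      ((h ε (by exact_mod_cast hε)).mono fun k hk => ENNReal.ofReal_le_of_le_toReal hk)
  calc ENNReal.ofReal c = ENNReal.ofReal (c - ε + ε) := by rw [sub_add_cancel]
    _ ≤ ENNReal.ofReal (c - ε) + ε :=
        ENNReal.ofReal_add_le.trans_eq (by rw [ENNReal.ofReal_coe_nnreal])
    _ ≤ liminf u atTop + ε := by gcongr

theorem ENNReal.exists_strictMono_eventually_sub_le_toReal {u : ℕ → ℝ≥0∞} (hu : ∀ n, u n ≠ ∞)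
    {c : ℝ} (hc : 0 < c) (h : ENNReal.ofReal c ≤ limsup u atTop) :
    ∃ φ : ℕ → ℕ, StrictMono φ ∧ ∀ ε > 0, ∀ᶠ k in atTop, c - ε ≤ (u (φ k)).toReal := by
  obtain ⟨φ, hφ, hφc⟩ : ∃ φ : ℕ → ℕ, StrictMono φ ∧ ∀ k, c - 1 / (k + 1) ≤ (u (φ k)).toReal := by
    refine extraction_forall_of_frequently (P := fun k n => c - 1 / (k + 1) ≤ (u n).toReal)
      fun k => ?_
    have hlt : ENNReal.ofReal (c - 1 / (k + 1)) < limsup u atTop :=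
      ((ENNReal.ofReal_lt_ofReal_iff hc).mpr (sub_lt_self c (by positivity))).trans_le h
    exact (frequently_lt_of_lt_limsup (by isBoundedDefault) hlt).mono fun n hn =>
      (ENNReal.ofReal_le_iff_le_toReal (hu n)).mp hn.le
  refine ⟨φ, hφ, fun ε hε => ?_⟩
  filter_upwards [tendsto_one_div_add_atTop_nhds_zero_nat.eventually (ge_mem_nhds hε)] with k hk
  linarith [hφc k]

theorem isPartiallyRigid_of_tendsto_atTop {X : Type*} [MeasurableSpace X] {μ : Measure X}
    {T : X → X} {γ : ℝ} {s : ℕ → ℕ} (hs : Tendsto s atTop atTop)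
    (h : ∀ A, MeasurableSet A →
      ENNReal.ofReal γ * μ A ≤ liminf (fun k => μ (A ∩ T^[s k] ⁻¹' A)) atTop) :
    IsPartiallyRigid μ T γ := by
  obtain ⟨ψ, hψ, hsψ⟩ := strictMono_subseq_of_tendsto_atTop hs
  refine ⟨fun k => s (ψ (k + 1)), fun a b hab => hsψ (Nat.succ_lt_succ hab),
    (Nat.zero_le _).trans_lt (hsψ Nat.zero_lt_one), fun A hA => (h A hA).trans ?_⟩
  exact (hψ.tendsto_atTop.comp (tendsto_add_atTop_nat 1)).liminf_le_liminf_comp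
    (u := fun n => μ (A ∩ T^[s n] ⁻¹' A))

theorem IsCompleteWord.ne_nil {α : Type*} {w : List α} (hw : IsCompleteWord w) : w ≠ [] := by
  rintro rfl
  simp [IsCompleteWord] at hw

namespace KRPartition

variable {X : Type*} [MeasurableSpace X] {T : X → X} {P : KRPartition X T}

theorem IsAtom.measurableSet (hT : MeasurableEmbedding T) {s : Set X} (hs : P.IsAtom s) :
    MeasurableSet s := by
  obtain ⟨a, j, -, rfl⟩ := hs
  exact (hT.iterate j).measurableSet_image' (P.meas a)

variable (P)

theorem measurableSet_wordBase (hT : Measurable T) (w : List (Fin P.d)) :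
    MeasurableSet (P.wordBase w) := by
  simp only [wordBase, ofPred_forall]
  exact .iInter fun i => hT.iterate _ (P.meas _)

theorem measurableSet_wordTower (hT : MeasurableEmbedding T) (w : List (Fin P.d)) :
    MeasurableSet (P.wordTower w) :=
  .biUnion (to_countable _) fun j _ =>
    (hT.iterate j).measurableSet_image' (P.measurableSet_wordBase hT.measurable w)

def IsSaturated (A : Set X) : Prop :=
  ∀ s, P.IsAtom s → s ⊆ A ∨ s ⊆ Aᶜ

variable {P}

theorem isSaturated_empty : P.IsSaturated ∅ :=
  fun _ _ => .inr (by simp)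

theorem IsSaturated.compl {A : Set X} (hA : P.IsSaturated A) : P.IsSaturated Aᶜ :=
  fun s hs => by rw [compl_compl]; exact (hA s hs).symm

theorem IsSaturated.union {A A' : Set X} (hA : P.IsSaturated A) (hA' : P.IsSaturated A') :
    P.IsSaturated (A ∪ A') := by
  intro s hs
  rcases hA s hs with h | h
  · exact .inl (h.trans subset_union_left)
  rcases hA' s hs with h' | h'
  · exact .inl (h'.trans subset_union_right)
  · exact .inr (compl_union A A' ▸ subset_inter h h')

theorem IsAtom.isSaturated {s : Set X} (hs : P.IsAtom s) : P.IsSaturated s := by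
  obtain ⟨a, j, hj, rfl⟩ := hs
  rintro _ ⟨a', j', hj', rfl⟩
  by_cases h : (a', j') = (a, j)
  · obtain ⟨rfl, rfl⟩ := Prod.mk.inj h
    exact .inl subset_rfl
  · exact .inr (P.disj a' a j' j hj' hj h).subset_compl_right

theorem wordBase_cons_subset_B (a : Fin P.d) (l : List (Fin P.d)) :
    P.wordBase (a :: l) ⊆ P.B a :=
  fun _ hy => hy ⟨0, by simp⟩

theorem wordBase_cons_subset_base (a : Fin P.d) (l : List (Fin P.d)) :
    P.wordBase (a :: l) ⊆ P.base :=
  (P.wordBase_cons_subset_B a l).trans (subset_iUnion P.B a)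

theorem _root_.IsCompleteWord.iterate_wordSum_mem_B {a : Fin P.d} {l : List (Fin P.d)}
    (hw : IsCompleteWord (a :: l)) {y : X} (hy : y ∈ P.wordBase (a :: l)) :
    T^[P.wordSum (a :: l)] y ∈ P.B a := by
  have hlast : (a :: l)[l.length] = a := by
    have := hw.2
    rw [List.getLast?_eq_getElem?] at this
    simpa using this.symm
  simpa [wordSum, List.dropLast_eq_take, hlast] using hy ⟨l.length, by simp⟩

theorem _root_.IsCompleteWord.h_le_wordSum {a : Fin P.d} {l : List (Fin P.d)}
    (hw : IsCompleteWord (a :: l)) : P.h a ≤ P.wordSum (a :: l) := by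
  have hl : l ≠ [] := by rintro rfl; simp [IsCompleteWord] at hw
  simp [wordSum, List.dropLast_cons_of_ne_nil hl]

theorem IsSaturated.iterate_wordSum_mem {A : Set X} (hA : P.IsSaturated A) {a : Fin P.d}
    {l : List (Fin P.d)} (hw : IsCompleteWord (a :: l)) {y : X} (hy : y ∈ P.wordBase (a :: l))
    {k : ℕ} (hk : k < P.h a) (hyA : T^[k] y ∈ A) : T^[P.wordSum (a :: l)] (T^[k] y) ∈ A := by
  have hatom : P.IsAtom (T^[k] '' P.B a) := ⟨a, k, hk, rfl⟩
  have hreturn : T^[P.wordSum (a :: l)] (T^[k] y) ∈ T^[k] '' P.B a := by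
    rw [← Function.iterate_add_apply, add_comm, Function.iterate_add_apply]
    exact mem_image_of_mem _ (hw.iterate_wordSum_mem_B hy)
  rcases hA _ hatom with hsub | hsub
  · exact hsub hreturn
  · exact absurd hyA (hsub (mem_image_of_mem _ (P.wordBase_cons_subset_B a l hy)))

variable {μ : Measure X} [IsFiniteMeasure μ]

theorem measureReal_wordTower_le (hT : MeasurePreserving T μ μ) (hTe : MeasurableEmbedding T)
    {w : List (Fin P.d)} (hw : IsCompleteWord w) :
    μ.real (P.wordTower w) ≤ P.wordSum w * μ.real P.base := by
  obtain ⟨a, l, rfl⟩ := List.exists_cons_of_ne_nil hw.ne_nil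
  calc μ.real (P.wordTower (a :: l))
      ≤ ∑ j ∈ Finset.range (P.h a), μ.real (T^[j] '' P.wordBase (a :: l)) :=
        measureReal_biUnion_finset_le _ _
    _ = P.h a * μ.real (P.wordBase (a :: l)) := by
        simp [hT.measureReal_image_iterate hTe]
    _ ≤ P.wordSum (a :: l) * μ.real P.base :=
        mul_le_mul (mod_cast hw.h_le_wordSum)
          (measureReal_mono (P.wordBase_cons_subset_base a l)) measureReal_nonneg (by positivity)

theorem measureReal_wordTower_inter_preimage_le (hT : MeasurePreserving T μ μ)
    (hTe : MeasurableEmbedding T) {A : Set X} (hA : MeasurableSet A) (hAs : P.IsSaturated A)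
    {w : List (Fin P.d)} (hw : IsCompleteWord w) (i : ℕ) :
    μ.real (P.wordTower w ∩ T^[i] ⁻¹' A) ≤
      μ.real (A ∩ T^[P.wordSum w] ⁻¹' A) + i * μ.real P.base := by
  obtain ⟨a, l, rfl⟩ := List.exists_cons_of_ne_nil hw.ne_nil
  set s := P.wordSum (a :: l)
  have hsplit : P.wordTower (a :: l) ∩ T^[i] ⁻¹' A ⊆
      T^[i] ⁻¹' (A ∩ T^[s] ⁻¹' A) ∪
        ⋃ j ∈ Finset.Ico (P.h a - i) (P.h a), T^[j] '' P.wordBase (a :: l) := by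
    rintro _ ⟨hx, hxA⟩
    obtain ⟨j, hj, y, hy, rfl⟩ : ∃ j, j < P.h a ∧ ∃ y ∈ P.wordBase (a :: l), T^[j] y = _ := by
      simpa [wordTower] using hx
    rw [mem_preimage, ← Function.iterate_add_apply] at hxA
    by_cases hji : j < P.h a - i
    · left
      rw [mem_preimage, ← Function.iterate_add_apply]
      exact ⟨hxA, hAs.iterate_wordSum_mem hw hy (by omega) hxA⟩
    · right
      exact mem_biUnion (Finset.mem_Ico.mpr ⟨by omega, hj⟩) (mem_image_of_mem _ hy)
  calc μ.real (P.wordTower (a :: l) ∩ T^[i] ⁻¹' A)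
      ≤ μ.real (T^[i] ⁻¹' (A ∩ T^[s] ⁻¹' A)) +
          ∑ j ∈ Finset.Ico (P.h a - i) (P.h a), μ.real (T^[j] '' P.wordBase (a :: l)) :=
        (measureReal_mono hsplit).trans <| (measureReal_union_le _ _).trans <|
          add_le_add_right (measureReal_biUnion_finset_le _ _) _
    _ = μ.real (A ∩ T^[s] ⁻¹' A) + (P.h a - (P.h a - i) : ℕ) * μ.real (P.wordBase (a :: l)) := by
        rw [(hT.iterate i).measureReal_preimage
          (hA.inter (hT.measurable.iterate s hA)).nullMeasurableSet]
        simp [hT.measureReal_image_iterate hTe]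
    _ ≤ μ.real (A ∩ T^[s] ⁻¹' A) + i * μ.real P.base :=
        add_le_add_right (mul_le_mul (mod_cast (by omega : P.h a - (P.h a - i) ≤ i))
          (measureReal_mono (P.wordBase_cons_subset_base a l)) measureReal_nonneg (by positivity)) _

end KRPartition

theorem KRPartition.tendsto_wordSum_atTop {X : Type*} [MeasurableSpace X] {μ : Measure X}
    [IsFiniteMeasure μ] {T : X → X} (hT : MeasurePreserving T μ μ) (hTe : MeasurableEmbedding T)
    {P : ℕ → KRPartition X T} (hP : Tendsto (fun k => μ.real (P k).base) atTop (nhds 0))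
    (w : (k : ℕ) → List (Fin (P k).d)) (hw : ∀ k, IsCompleteWord (w k)) {c : ℝ} (hc : 0 < c)
    (hcw : ∀ᶠ k in atTop, c ≤ μ.real ((P k).wordTower (w k))) :
    Tendsto (fun k => (P k).wordSum (w k)) atTop atTop := by
  refine tendsto_atTop.mpr fun M => ?_
  have hsmall : ∀ᶠ k in atTop, (M + 1) * μ.real (P k).base < c := by
    have := hP.const_mul ((M : ℝ) + 1)
    rw [mul_zero] at this
    exact this.eventually (gt_mem_nhds hc)
  filter_upwards [hcw, hsmall] with k hk hk'
  by_contra! hlt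
  have hle : ((P k).wordSum (w k) : ℝ) ≤ M + 1 := by exact_mod_cast (by omega : _ ≤ M + 1)
  have htower := (P k).measureReal_wordTower_le hT hTe (hw k)
  nlinarith [measureReal_nonneg (μ := μ) (s := (P k).base)]

namespace KRSequence

variable {X : Type*} [MeasurableSpace X] {μ : Measure X} {T : X → X} (K : KRSequence X μ T)

theorem exists_isAtom_superset {m n : ℕ} (hmn : m ≤ n) {s : Set X} (hs : (K.P n).IsAtom s) :
    ∃ t, (K.P m).IsAtom t ∧ s ⊆ t := by
  induction n, hmn using Nat.le_induction generalizing s with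
  | base => exact ⟨s, hs, subset_rfl⟩
  | succ n _ ih =>
    obtain ⟨t, ht, hst⟩ := K.kr2 n s hs
    obtain ⟨u, hu, htu⟩ := ih ht
    exact ⟨u, hu, hst.trans htu⟩

theorem isSaturated_of_le {m n : ℕ} (hmn : m ≤ n) {A : Set X} (hA : (K.P m).IsSaturated A) :
    (K.P n).IsSaturated A := fun s hs => by
  obtain ⟨t, ht, hst⟩ := K.exists_isAtom_superset hmn hs
  exact (hA t ht).imp hst.trans hst.trans

theorem tendsto_measureReal_base [IsFiniteMeasure μ] :
    Tendsto (fun n => μ.real (K.P n).base) atTop (nhds 0) :=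
  (ENNReal.tendsto_toReal_zero_iff (fun _ => measure_ne_top μ _)).mpr K.kr3

def saturatedSets : Set (Set X) :=
  {A | MeasurableSet A ∧ ∃ n, (K.P n).IsSaturated A}

theorem isSetAlgebra_saturatedSets : IsSetAlgebra K.saturatedSets where
  empty_mem := ⟨.empty, 0, KRPartition.isSaturated_empty⟩
  compl_mem := fun _ ⟨hA, n, hAn⟩ => ⟨hA.compl, n, hAn.compl⟩
  union_mem := fun _ _ ⟨hA, n, hAn⟩ ⟨hA', n', hAn'⟩ =>
    ⟨hA.union hA', max n n', (K.isSaturated_of_le (le_max_left n n') hAn).union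
      (K.isSaturated_of_le (le_max_right n n') hAn')⟩

theorem generateFrom_saturatedSets (hT : MeasurableEmbedding T) :
    MeasurableSpace.generateFrom K.saturatedSets = ‹MeasurableSpace X› := by
  refine le_antisymm (MeasurableSpace.generateFrom_le fun A hA => hA.1) ?_
  conv_lhs => rw [← K.kr4]
  exact MeasurableSpace.generateFrom_mono fun s ⟨n, hs⟩ => ⟨hs.measurableSet hT, n, hs.isSaturated⟩

theorem exists_isSaturated_measureReal_symmDiff_lt [IsFiniteMeasure μ]
    (hT : MeasurableEmbedding T) {A : Set X} (hA : MeasurableSet A) {ε : ℝ} (hε : 0 < ε) :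
    ∃ n A', MeasurableSet A' ∧ (K.P n).IsSaturated A' ∧ μ.real (A ∆ A') < ε := by
  obtain ⟨A', ⟨hA', n, hA'n⟩, hAA'⟩ :=
    (Measure.MeasureDense.of_generateFrom_isSetAlgebra_finite μ K.isSetAlgebra_saturatedSets
      (K.generateFrom_saturatedSets hT).symm).approx A hA (measure_ne_top μ A) ε hε
  exact ⟨n, A', hA', hA'n, ENNReal.toReal_lt_of_lt_ofReal hAA'⟩

end KRSequence

section MeanErgodic

variable {X : Type*} [MeasurableSpace X] {μ : Measure X} {T : X → X}

noncomputable def koopman (hT : MeasurePreserving T μ μ) : Lp ℝ 2 μ →L[ℝ] Lp ℝ 2 μ :=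
  (Lp.compMeasurePreservingₗᵢ ℝ T hT).toContinuousLinearMap

theorem koopman_iterate_apply (hT : MeasurePreserving T μ μ) (n : ℕ) (f : Lp ℝ 2 μ) :
    (koopman hT)^[n] f = Lp.compMeasurePreserving T^[n] (hT.iterate n) f := by
  rw [← Lp.compMeasurePreserving_iterate hT n]
  rfl

theorem norm_koopman_le (hT : MeasurePreserving T μ μ) : ‖koopman hT‖ ≤ 1 :=
  LinearIsometry.norm_toContinuousLinearMap_le _

variable [IsProbabilityMeasure μ]

theorem Ergodic.starProjection_koopman_ae_eq (herg : Ergodic T μ) (f : Lp ℝ 2 μ) :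
    ((koopman herg.toMeasurePreserving).eqLocus (1 : Lp ℝ 2 μ →L[ℝ] Lp ℝ 2 μ)).starProjection f
      =ᵐ[μ] fun _ => ∫ x, f x ∂μ := by
  set U := koopman herg.toMeasurePreserving
  set V := U.eqLocus (1 : Lp ℝ 2 μ →L[ℝ] Lp ℝ 2 μ)
  set p := V.starProjection f
  have hpU : U p = p := V.starProjection_apply_mem f
  have hpT : ⇑p ∘ T =ᵐ[μ] ⇑p := by
    have h := Lp.coeFn_compMeasurePreserving p herg.toMeasurePreserving
    change ⇑(U p) =ᵐ[μ] _ at h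
    rw [hpU] at h
    exact h.symm
  obtain ⟨c, hc⟩ := herg.ae_eq_const_of_ae_eq_comp_ae (Lp.aestronglyMeasurable p) hpT
  set one := indicatorConstLp 2 MeasurableSet.univ (measure_ne_top μ univ) (1 : ℝ)
  have inner_one (g : Lp ℝ 2 μ) : ⟪one, g⟫_ℝ = ∫ x, g x ∂μ := by
    rw [L2.inner_indicatorConstLp_one, Measure.restrict_univ]
  -- `U one = one` holds by `rfl`, since `T ⁻¹' univ = univ`.
  have hone : V.starProjection one = one :=
    (Submodule.starProjection_eq_self_iff (K := V)).mpr rfl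
  have hc_eq : c = ∫ x, f x ∂μ := by
    calc c = ∫ x, p x ∂μ := by simp [integral_congr_ae hc]
      _ = ∫ x, f x ∂μ := by
        rw [← inner_one, ← inner_one, ← V.inner_starProjection_left_eq_right, hone]
  exact hc_eq ▸ hc

theorem Ergodic.eventually_abs_average_measureReal_inter_preimage_sub_le (herg : Ergodic T μ)
    {A : Set X} (hA : MeasurableSet A) {ε : ℝ} (hε : 0 < ε) :
    ∀ᶠ N : ℕ in atTop, ∀ E, MeasurableSet E →
      |(N : ℝ)⁻¹ * ∑ i ∈ Finset.range N, μ.real (E ∩ T^[i] ⁻¹' A) - μ.real E * μ.real A| ≤ ε := by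
  set hT := herg.toMeasurePreserving
  set U := koopman hT
  set indA := indicatorConstLp 2 hA (measure_ne_top μ A) (1 : ℝ)
  set p := (U.eqLocus (1 : Lp ℝ 2 μ →L[ℝ] Lp ℝ 2 μ)).starProjection indA
  have hconv := U.tendsto_birkhoffAverage_orthogonalProjection (norm_koopman_le hT) indA
  filter_upwards [hconv.eventually (Metric.closedBall_mem_nhds _ hε)] with N hN E hE
  set indE := indicatorConstLp 2 hE (measure_ne_top μ E) (1 : ℝ)
  have h_avg : ⟪indE, birkhoffAverage ℝ U _root_.id N indA⟫_ℝ =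
      (N : ℝ)⁻¹ * ∑ i ∈ Finset.range N, μ.real (E ∩ T^[i] ⁻¹' A) := by
    simp only [birkhoffAverage, birkhoffSum, real_inner_smul_right, inner_sum, id,
      U, indA, indE, koopman_iterate_apply, Lp.indicatorConstLp_compMeasurePreserving,
      L2.real_inner_indicatorConstLp_one_indicatorConstLp_one]
  have h_proj : ⟪indE, p⟫_ℝ = μ.real E * μ.real A := by
    rw [L2.inner_indicatorConstLp_one,
      integral_congr_ae (ae_restrict_of_ae (herg.starProjection_koopman_ae_eq indA)),
      setIntegral_const, integral_indicatorConstLp, smul_eq_mul, smul_eq_mul, mul_one]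
  have h_norm : ‖indE‖ ≤ 1 :=
    norm_indicatorConstLp_le.trans <| by
      simpa using Real.rpow_le_one measureReal_nonneg measureReal_le_one (by norm_num)
  rw [← h_avg, ← h_proj, ← inner_sub_right]
  calc |⟪indE, birkhoffAverage ℝ U _root_.id N indA - p⟫_ℝ|
      ≤ ‖indE‖ * ‖birkhoffAverage ℝ U _root_.id N indA - p‖ := abs_real_inner_le_norm _ _
    _ ≤ 1 * ε := mul_le_mul h_norm (by rw [← dist_eq_norm]; exact hN)
        (norm_nonneg _) zero_le_one
    _ = ε := one_mul ε

end MeanErgodic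

namespace KRSequence

variable {X : Type*} [MeasurableSpace X] {μ : Measure X} [IsProbabilityMeasure μ] {T : X → X}
  (K : KRSequence X μ T)

theorem eventually_measureReal_inter_preimage_wordSum_ge_of_isSaturated (herg : Ergodic T μ)
    (hTe : MeasurableEmbedding T) (w : (n : ℕ) → List (Fin (K.P n).d))
    (hw : ∀ n, IsCompleteWord (w n)) {m : ℕ} {A : Set X} (hA : MeasurableSet A)
    (hAm : (K.P m).IsSaturated A) {ε : ℝ} (hε : 0 < ε) :
    ∀ᶠ n in atTop, μ.real A * μ.real ((K.P n).wordTower (w n)) - ε ≤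
      μ.real (A ∩ T^[(K.P n).wordSum (w n)] ⁻¹' A) := by
  obtain ⟨N, hN, hNpos⟩ :=
    ((herg.eventually_abs_average_measureReal_inter_preimage_sub_le hA (half_pos hε)).and
      (eventually_gt_atTop 0)).exists
  have hbase : ∀ᶠ n in atTop, N * μ.real (K.P n).base ≤ ε / 2 := by
    have := K.tendsto_measureReal_base.const_mul (N : ℝ)
    rw [mul_zero] at this
    exact this.eventually (ge_mem_nhds (half_pos hε))
  filter_upwards [eventually_ge_atTop m, hbase] with n hmn hn
  set 𝒯 := (K.P n).wordTower (w n)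
  set r := μ.real (A ∩ T^[(K.P n).wordSum (w n)] ⁻¹' A)
  have hterm : ∀ i ∈ Finset.range N, μ.real (𝒯 ∩ T^[i] ⁻¹' A) ≤ r + N * μ.real (K.P n).base :=
    fun i hi => ((K.P n).measureReal_wordTower_inter_preimage_le herg.toMeasurePreserving hTe hA
      (K.isSaturated_of_le hmn hAm) (hw n) i).trans <| by
        gcongr
        exact_mod_cast (Finset.mem_range.mp hi).le
  have havg : (N : ℝ)⁻¹ * ∑ i ∈ Finset.range N, μ.real (𝒯 ∩ T^[i] ⁻¹' A) ≤
      r + N * μ.real (K.P n).base := by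
    have hN0 : (N : ℝ) ≠ 0 := by exact_mod_cast hNpos.ne'
    calc (N : ℝ)⁻¹ * ∑ i ∈ Finset.range N, μ.real (𝒯 ∩ T^[i] ⁻¹' A)
        ≤ (N : ℝ)⁻¹ * (N * (r + N * μ.real (K.P n).base)) := by
          gcongr
          exact (Finset.sum_le_card_nsmul _ _ _ hterm).trans_eq
            (by rw [Finset.card_range, nsmul_eq_mul])
      _ = r + N * μ.real (K.P n).base := inv_mul_cancel_left₀ hN0 _
  have hmet := abs_le.mp (hN 𝒯 ((K.P n).measurableSet_wordTower hTe (w n)))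
  linarith [hmet.1]

theorem eventually_measureReal_inter_preimage_wordSum_ge (herg : Ergodic T μ)
    (hTe : MeasurableEmbedding T) (w : (n : ℕ) → List (Fin (K.P n).d))
    (hw : ∀ n, IsCompleteWord (w n)) {A : Set X} (hA : MeasurableSet A) {ε : ℝ} (hε : 0 < ε) :
    ∀ᶠ n in atTop, μ.real A * μ.real ((K.P n).wordTower (w n)) - ε ≤
      μ.real (A ∩ T^[(K.P n).wordSum (w n)] ⁻¹' A) := by
  have hδ : 0 < ε / 4 := by positivity
  obtain ⟨m, A', hA', hA'm, hAA'⟩ := K.exists_isSaturated_measureReal_symmDiff_lt hTe hA hδ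
  filter_upwards [K.eventually_measureReal_inter_preimage_wordSum_ge_of_isSaturated herg hTe w hw
    hA' hA'm hδ] with n hn
  have hret := abs_le.mp <| (herg.toMeasurePreserving.iterate ((K.P n).wordSum (w n))
    ).abs_measureReal_inter_preimage_sub_le hA hA'
  have hmeas := abs_le.mp <|
    abs_measureReal_sub_le_measureReal_symmDiff (μ := μ) hA.nullMeasurableSet hA'.nullMeasurableSet
  have h𝒯 : μ.real ((K.P n).wordTower (w n)) ≤ 1 := measureReal_le_one
  nlinarith [measureReal_nonneg (μ := μ) (s := (K.P n).wordTower (w n))]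

end KRSequence

theorem kr_sufficient_condition_partial_rigidity_general
    {X : Type*} [MeasurableSpace X]
    (μ : Measure X) [IsProbabilityMeasure μ] (T : X → X)
    (herg : Ergodic T μ)
    (hinv : ∃ Tinv : X → X, Measurable Tinv ∧
      Function.LeftInverse Tinv T ∧ Function.RightInverse Tinv T)
    (γ : ℝ) (hγ : γ ∈ Set.Ioc (0 : ℝ) 1)
    (K : KRSequence X μ T)
    (w : (n : ℕ) → List (Fin (K.P n).d))
    (hw : ∀ n, IsCompleteWord (w n))
    (hlim : ENNReal.ofReal γ ≤
      Filter.limsup (fun n => μ ((K.P n).wordTower (w n))) Filter.atTop) :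
    IsPartiallyRigid μ T γ := by
  obtain ⟨Tinv, hTinv, hleft, hright⟩ := hinv
  have hTe : MeasurableEmbedding T := .of_measurable_inverse herg.measurable
    (by rw [hright.surjective.range_eq]; exact .univ) hTinv hleft
  obtain ⟨φ, hφ, hφγ⟩ : ∃ φ : ℕ → ℕ, StrictMono φ ∧ ∀ ε > 0, ∀ᶠ k in atTop,
      γ - ε ≤ μ.real ((K.P (φ k)).wordTower (w (φ k))) :=
    ENNReal.exists_strictMono_eventually_sub_le_toReal (fun n => measure_ne_top μ _) hγ.1 hlim
  have hs : Tendsto (fun k => (K.P (φ k)).wordSum (w (φ k))) atTop atTop :=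
    KRPartition.tendsto_wordSum_atTop herg.toMeasurePreserving hTe
      (K.tendsto_measureReal_base.comp hφ.tendsto_atTop) (fun k => w (φ k)) (fun k => hw (φ k))
      (half_pos hγ.1) ((hφγ _ (half_pos hγ.1)).mono fun k hk => by linarith)
  refine isPartiallyRigid_of_tendsto_atTop hs fun A hA => ?_
  rw [← ENNReal.ofReal_toReal (measure_ne_top μ A), ← ENNReal.ofReal_mul hγ.1.le]
  refine ENNReal.ofReal_le_liminf_of_forall_eventually fun ε hε => ?_
  filter_upwards [hφ.tendsto_atTop.eventually
      (K.eventually_measureReal_inter_preimage_wordSum_ge herg hTe w hw hA (half_pos hε)),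
    hφγ _ (half_pos hε)] with k hk hkγ
  change γ * μ.real A - ε ≤ μ.real _
  have hA1 : μ.real A ≤ 1 := measureReal_le_one
  nlinarith [measureReal_nonneg (μ := μ) (s := A)]

/-- Sufficient condition for partial rigidity: if there is a sequence of complete words
`(w(n))ₙ` with `limsup_n μ(𝒯⁽ⁿ⁾_{w(n)}) ≥ γ`, then the system is `γ`-rigid. -/
theorem kr_sufficient_condition_partial_rigidity
    {X : Type*} [MeasurableSpace X] [StandardBorelSpace X]
    (μ : Measure X) [IsProbabilityMeasure μ] (T : X → X)
    (herg : Ergodic T μ)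
    (hinv : ∃ Tinv : X → X, Measurable Tinv ∧
      Function.LeftInverse Tinv T ∧ Function.RightInverse Tinv T)
    (hna : ∀ x : X, μ {x} = 0)
    (γ : ℝ) (hγ : γ ∈ Set.Ioc (0 : ℝ) 1)
    (K : KRSequence X μ T)
    (w : (n : ℕ) → List (Fin (K.P n).d))
    (hw : ∀ n, IsCompleteWord (w n))
    (hlim : ENNReal.ofReal γ ≤
      Filter.limsup (fun n => μ ((K.P n).wordTower (w n))) Filter.atTop) :
    IsPartiallyRigid μ T γ :=
  kr_sufficient_condition_partial_rigidity_general μ T herg hinv γ hγ K w hw hlim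
end

section
/- Let σ : 𝒜* → 𝒜* be a primitive substitution of constant length whose substitution subshift X_σ is infinite, and let μ be an ergodic shift-invariant Borel probability measure on (X_σ, S) (such a measure is unique). Then (X_σ, ℬ, μ, S) is rigid if and only if limsup_{m→∞} q_{X_σ}(m)/p_{X_σ}(m) = 1, where p_{X_σ}(m) = |ℒ_m(X_σ)| is the number of words of length m in the language of X_σ and q_{X_σ}(m) = |𝒞ℒ_m(X_σ)| is the number of complete words of length m in the language of X_σ. -/
open MeasureTheory Filter Set

/-- The two-sided shift map `S((xₖ)ₖ) = (xₖ₊₁)ₖ`. -/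
def shiftMap {α : Type*} (x : ℤ → α) : ℤ → α := fun k => x (k + 1)

/-- The word `x_i x_{i+1} ⋯ x_{i+m-1}` read in the two-sided sequence `x`. -/
def subwordAt {α : Type*} (x : ℤ → α) (i : ℤ) (m : ℕ) : List α :=
  List.ofFn fun j : Fin m => x (i + (j : ℤ))

/-- The `n`-th iterate `σⁿ` of a substitution, applied to letters. -/
def substIter {𝒜 : Type*} (σ : 𝒜 → List 𝒜) : ℕ → 𝒜 → List 𝒜
  | 0, a => [a]
  | n + 1, a => ((σ a).map (substIter σ n)).flatten

/-- The language `ℒ(σ)` of a substitution: words occurring in some `σⁿ(a)`, `n ≥ 1`. -/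
def substLanguage {𝒜 : Type*} (σ : 𝒜 → List 𝒜) : Set (List 𝒜) :=
  {w | ∃ n, 1 ≤ n ∧ ∃ a, w <:+: substIter σ n a}

/-- The substitution subshift `X_σ`: two-sided sequences all of whose finite subwords
belong to `ℒ(σ)`. -/
def substSubshift {𝒜 : Type*} (σ : 𝒜 → List 𝒜) : Set (ℤ → 𝒜) :=
  {x | ∀ (i : ℤ) (m : ℕ), subwordAt x i m ∈ substLanguage σ}

/-- A substitution is primitive if, for some `n ≥ 1`, every letter `b` occurs in
`σⁿ(a)` for every letter `a`. -/
def IsPrimitiveSubst {𝒜 : Type*} (σ : 𝒜 → List 𝒜) : Prop :=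
  ∃ n, 1 ≤ n ∧ ∀ a b, b ∈ substIter σ n a

/-- A substitution has constant length if all images of letters have the same length
`ℓ ≥ 1`. -/
def IsConstantLengthSubst {𝒜 : Type*} (σ : 𝒜 → List 𝒜) : Prop :=
  ∃ ℓ, 1 ≤ ℓ ∧ ∀ a, (σ a).length = ℓ

/-- The cylinder set `[w]_{X_σ}` of a word `w` in the substitution subshift `X_σ`. -/
def substCylinder {𝒜 : Type*} (σ : 𝒜 → List 𝒜) (w : List 𝒜) : Set (ℤ → 𝒜) :=
  {x | x ∈ substSubshift σ ∧ ∀ i : Fin w.length, x (i : ℤ) = w.get i}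

/-!
Primitivity and constant length make the language linearly recurrent (a word `w` occurs in every
word of length `R |w|`) and of linear complexity (`p(m) ≤ C m`), and since `X_σ` is infinite,
`p(m) ≥ m + 1` (Morse–Hedlund). Consequently a word of length `m` has no period below `m / R`, and
the measure of its cylinder lies between `1 / (R m)` (its first `R m` translates cover `X_σ`) and
`2 R / m` (its first `m / R` translates are disjoint).

The set `{x | x₀ ≠ xₙ}` is, up to a null set, the disjoint union of the cylinders of the
non-complete words of length `n + 1`, so its measure is comparable, up to constants, with the
proportion `1 - q(n+1) / p(n+1)` of non-complete words. Rigidity of the shift amounts to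
`μ {x | x₀ ≠ x_{n_k}} → 0` along some sequence (it suffices to test it on cylinders, which are
dense among measurable sets), that is, to `1` being a cluster point of `q / p`, i.e.
`limsup q / p = 1`.
-/

open Topology
open scoped symmDiff

namespace List

variable {α β : Type*}

theorem ofFn_snoc {n : ℕ} (v : Fin n → α) (a : α) :
    ofFn (Fin.snoc v a : Fin (n + 1) → α) = ofFn v ++ [a] := by
  rw [ofFn_succ', concat_eq_append]
  simp

theorem take_drop_infix (l : List α) (i n : ℕ) : (l.drop i).take n <:+: l :=
  (take_prefix _ _).isInfix.trans (drop_suffix _ _).isInfix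

theorem IsInfix.exists_eq_take_drop {w l : List α} (h : w <:+: l) :
    ∃ j, j + w.length ≤ l.length ∧ w = (l.drop j).take w.length := by
  obtain ⟨s, t, rfl⟩ := h
  exact ⟨s.length, by simp, by simp⟩

theorem take_drop_infix_take_drop_of_le (l : List α) {i j m n : ℕ} (hij : i ≤ j)
    (hn : j + n ≤ i + m) : (l.drop j).take n <:+: (l.drop i).take m := by
  have h : (l.drop j).take n = (((l.drop i).take m).drop (j - i)).take n := by
    rw [drop_take, take_take, drop_drop, Nat.add_sub_cancel' hij, min_eq_left (by omega)]
  rw [h]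
  exact take_drop_infix _ _ _

theorem exists_shift_of_ofFn_infix_ofFn {m n : ℕ} {u : Fin n → α} {v : Fin m → α}
    (h : ofFn u <:+: ofFn v) : ∃ j, ∃ hj : n + j ≤ m, ∀ k : Fin n, v ⟨k + j, by omega⟩ = u k := by
  obtain ⟨j, hj, h⟩ := infix_iff_getElem?.1 h
  simp only [length_ofFn] at hj h
  refine ⟨j, hj, fun k => ?_⟩
  simpa [List.getElem?_ofFn, show (k : ℕ) + j < m by omega] using h k (by simp)

variable {L : List α} {f : α → List β} {c : ℕ}

theorem length_flatMap_of_length_eq (hc : ∀ a ∈ L, (f a).length = c) :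
    (L.flatMap f).length = c * L.length := by
  induction L with
  | nil => simp
  | cons a L ih =>
    simp [hc a mem_cons_self, ih fun b hb => hc b (mem_cons_of_mem _ hb), Nat.mul_succ,
      Nat.add_comm]

theorem drop_mul_flatMap (hc : ∀ a ∈ L, (f a).length = c) (i : ℕ) :
    (L.flatMap f).drop (c * i) = (L.drop i).flatMap f := by
  induction L generalizing i with
  | nil => simp
  | cons a L ih =>
    cases i with
    | zero => simp
    | succ i =>
      rw [flatMap_cons, show c * (i + 1) = (f a).length + c * i by rw [hc a mem_cons_self]; ring,
        ← drop_drop, drop_left, ih (fun b hb => hc b (mem_cons_of_mem _ hb)), drop_succ_cons]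

theorem take_mul_flatMap (hc : ∀ a ∈ L, (f a).length = c) (i : ℕ) :
    (L.flatMap f).take (c * i) = (L.take i).flatMap f := by
  induction L generalizing i with
  | nil => simp
  | cons a L ih =>
    cases i with
    | zero => simp
    | succ i =>
      rw [flatMap_cons, show c * (i + 1) = (f a).length + c * i by rw [hc a mem_cons_self]; ring,
        take_length_add_append, ih (fun b hb => hc b (mem_cons_of_mem _ hb)), take_succ_cons,
        flatMap_cons]

theorem take_drop_mul_flatMap (hc : ∀ a ∈ L, (f a).length = c) (i k : ℕ) :
    ((L.flatMap f).drop (c * i)).take (c * k) = ((L.drop i).take k).flatMap f := by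
  rw [drop_mul_flatMap hc, take_mul_flatMap fun a ha => hc a (mem_of_mem_drop ha)]

theorem IsInfix.exists_infix_flatMap_take_two (hc : ∀ a ∈ L, (f a).length = c) {w : List β}
    (hw : w <:+: L.flatMap f) (hwc : w.length ≤ c) :
    ∃ i, w <:+: ((L.drop i).take 2).flatMap f := by
  rcases Nat.eq_zero_or_pos c with rfl | hc0
  · exact ⟨0, by simp_all⟩
  obtain ⟨j, -, hj⟩ := hw.exists_eq_take_drop
  refine ⟨j / c, ?_⟩
  rw [← take_drop_mul_flatMap hc, hj]
  apply take_drop_infix_take_drop_of_le _ (Nat.mul_div_le j c)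
  have := Nat.lt_mul_div_succ j hc0
  rw [mul_add] at this
  omega

theorem IsInfix.exists_infix_of_two_mul_le_length (hc : ∀ a ∈ L, (f a).length = c) (hc0 : 0 < c)
    {u : List β} (hu : u <:+: L.flatMap f) (hlen : 2 * c ≤ u.length) :
    ∃ a ∈ L, f a <:+: u := by
  obtain ⟨j, hjL, hj⟩ := hu.exists_eq_take_drop
  rw [length_flatMap_of_length_eq hc] at hjL
  have hdiv := Nat.mul_div_le j c
  have hi : j / c + 1 < L.length := by
    by_contra! h
    have := Nat.mul_le_mul_left c h
    rw [mul_add] at this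
    omega
  refine ⟨L[j / c + 1], getElem_mem hi, ?_⟩
  have hblock : f L[j / c + 1] = ((L.flatMap f).drop (c * (j / c + 1))).take (c * 1) := by
    rw [take_drop_mul_flatMap hc, drop_eq_getElem_cons hi, take_succ_cons, take_zero,
      flatMap_singleton]
  rw [hblock, hj]
  apply take_drop_infix_take_drop_of_le <;>
  · have := Nat.lt_mul_div_succ j hc0
    rw [mul_add] at this ⊢
    omega

end List

theorem Nat.exists_le_pow_le_mul {b m : ℕ} (hb : 2 ≤ b) (hm : 0 < m) :
    ∃ k, m ≤ b ^ k ∧ b ^ k ≤ b * m := by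
  rcases (show m = 1 ∨ 1 < m by omega) with rfl | hm1
  · exact ⟨0, by simp, by simp; omega⟩
  refine ⟨Nat.clog b m, Nat.le_pow_clog hb m, ?_⟩
  calc b ^ Nat.clog b m = b * b ^ (Nat.clog b m).pred := by
        rw [← pow_succ', Nat.succ_pred_eq_of_pos (Nat.clog_pos hb hm1)]
    _ ≤ b * m := Nat.mul_le_mul_left _ (Nat.pow_pred_clog_lt_self hb hm1).le

section ClusterPoints

theorem limsup_eq_iff_mapClusterPt {α β : Type*} [ConditionallyCompleteLinearOrder α]
    [TopologicalSpace α] [OrderTopology α] {l : Filter β} [l.NeBot] {u : β → α} {a : α}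
    (hua : ∀ᶠ b in l, u b ≤ a) (hu : IsBoundedUnder (· ≥ ·) l u) :
    limsup u l = a ↔ MapClusterPt a l u := by
  have hbdd : IsBoundedUnder (· ≤ ·) l u := isBoundedUnder_of_eventually_le hua
  exact ⟨fun h => h ▸ MapClusterPt.limsup hu.isCoboundedUnder_le hbdd, fun h =>
    le_antisymm (limsup_le_of_le hu.isCoboundedUnder_le hua) (h.le_limsup hbdd)⟩

theorem mapClusterPt_const_sub_iff {G β : Type*} [AddCommGroup G] [TopologicalSpace G]
    [IsTopologicalAddGroup G] {l : Filter β} {u : β → G} {c : G} :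
    MapClusterPt c l (fun b => c - u b) ↔ MapClusterPt 0 l u := by
  constructor <;> intro h <;>
    simpa [Function.comp_def] using h.continuousAt_comp (f := (c - ·)) (by fun_prop)

theorem mapClusterPt_comp_add_iff {X : Type*} [TopologicalSpace X] {u : ℕ → X} {x : X} (k : ℕ) :
    MapClusterPt x atTop (fun n => u (n + k)) ↔ MapClusterPt x atTop u := by
  rw [← Function.comp_def, mapClusterPt_comp, map_add_atTop_eq_nat]

theorem MapClusterPt.zero_of_le_mul {β : Type*} {l : Filter β} {u v : β → ℝ} {K : ℝ}
    (hv : MapClusterPt 0 l v) (hu : ∀ᶠ b in l, 0 ≤ u b) (huv : ∀ᶠ b in l, u b ≤ K * v b) :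
    MapClusterPt 0 l u := by
  rw [(nhds_basis_Ioo_pos (0 : ℝ)).mapClusterPt_iff_frequently] at hv ⊢
  intro ε hε
  have hK : 0 < |K| + 1 := by positivity
  refine ((hv (ε / (|K| + 1)) (by positivity)).and_eventually (hu.and huv)).mono
    fun b ⟨hvb, hub, huvb⟩ => ⟨by linarith, ?_⟩
  simp only [zero_sub, zero_add, Set.mem_Ioo] at hvb ⊢
  have : |v b| < ε / (|K| + 1) := abs_lt.2 hvb
  calc u b ≤ K * v b := huvb
    _ ≤ |K| * |v b| := (le_abs_self _).trans (abs_mul K (v b)).le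
    _ ≤ |K| * (ε / (|K| + 1)) := by gcongr
    _ < (|K| + 1) * (ε / (|K| + 1)) := by gcongr; linarith
    _ = ε := by field_simp

theorem exists_strictMono_tendsto_iff_mapClusterPt {X : Type*} [TopologicalSpace X]
    [FirstCountableTopology X] {u : ℕ → X} {x : X} :
    (∃ φ : ℕ → ℕ, StrictMono φ ∧ 0 < φ 0 ∧ Tendsto (u ∘ φ) atTop (𝓝 x)) ↔
      MapClusterPt x atTop u := by
  refine ⟨fun ⟨φ, hφ, _, h⟩ => .of_comp hφ.tendsto_atTop h.mapClusterPt, fun h => ?_⟩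
  obtain ⟨ψ, hψ, hlim⟩ := h.tendsto_subseq
  exact ⟨ψ ∘ (· + 1), hψ.comp fun _ _ h => Nat.add_lt_add_right h 1,
    (Nat.zero_le _).trans_lt (hψ zero_lt_one), hlim.comp (tendsto_add_atTop_nat 1)⟩

end ClusterPoints

section Words

variable {α : Type*}

def IsLinearlyRecurrent (L : Set (List α)) (R : ℕ) : Prop :=
  ∀ w ∈ L, ∀ u ∈ L, R * w.length ≤ u.length → w <:+: u

def IsExtendable (L : Set (List α)) : Prop :=
  ∀ w ∈ L, (∃ a, w ++ [a] ∈ L) ∧ ∃ a, a :: w ∈ L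

noncomputable def complexity (L : Set (List α)) (m : ℕ) : ℕ :=
  Nat.card {v : Fin m → α // List.ofFn v ∈ L}

def HasPeriod {m : ℕ} (v : Fin m → α) (d : ℕ) : Prop :=
  ∀ i j : Fin m, (i : ℕ) + d = j → v i = v j

theorem HasPeriod.apply_eq_of_add_mul_eq {m d : ℕ} {v : Fin m → α} (h : HasPeriod v d) (q : ℕ)
    (i j : Fin m) (hij : (i : ℕ) + d * q = j) : v i = v j := by
  induction q generalizing j with
  | zero => exact congrArg v (Fin.ext (by simpa using hij))
  | succ q ih =>
    have hk : (i : ℕ) + d * q < m := by rw [mul_add] at hij; omega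
    exact (ih ⟨_, hk⟩ rfl).trans (h _ j (by rw [← hij, mul_add]; simp; ring))

/-- A word with period `d` has at most `d` factors of length `d + 1`, one for each residue modulo
`d` of the starting position, while linear recurrence makes all words of length `d + 1` occur. -/
theorem IsLinearlyRecurrent.not_hasPeriod {L : Set (List α)} {R : ℕ} (hR : IsLinearlyRecurrent L R)
    {d m : ℕ} (hd0 : 0 < d) (hd : d < complexity L (d + 1)) {v : Fin m → α}
    (hv : List.ofFn v ∈ L) (hdm : R * (d + 1) ≤ m) : ¬ HasPeriod v d := by
  intro hper
  have hres : ∀ u : {u : Fin (d + 1) → α // List.ofFn u ∈ L}, ∃ r : Fin d, (r : ℕ) + d < m ∧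
      ∀ (k : Fin (d + 1)) (p : Fin m), (p : ℕ) = k + r → v p = u.1 k := by
    rintro ⟨u, hu⟩
    obtain ⟨j, hj, hju⟩ := List.exists_shift_of_ofFn_infix_ofFn (hR _ hu _ hv (by simpa using hdm))
    have hmod := Nat.mod_add_div j d
    have hjd := Nat.mod_le j d
    refine ⟨⟨j % d, Nat.mod_lt _ hd0⟩, by simp; omega, fun k p hp => ?_⟩
    show v p = u k
    rw [← hju k]
    exact hper.apply_eq_of_add_mul_eq (j / d) p _ (by simp only [hp]; omega)
  choose r hrm hr using hres
  have hinj : Function.Injective r := fun u u' h => Subtype.ext <| funext fun k => by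
    have hk : (k : ℕ) + r u < m := by have := hrm u; omega
    rw [← hr u k ⟨_, hk⟩ rfl, ← hr u' k ⟨_, hk⟩ (by simp [h])]
  have := Nat.card_le_card_of_injective r hinj
  rw [Nat.card_fin] at this
  exact absurd hd (not_lt.2 this)

theorem isCompleteWord_ofFn_iff {n : ℕ} (hn : 0 < n) (v : Fin (n + 1) → α) :
    IsCompleteWord (List.ofFn v) ↔ v 0 = v (Fin.last n) := by
  simp only [IsCompleteWord, List.length_ofFn, List.getLast?_eq_getElem?, List.head?_eq_getElem?,
    List.getElem?_ofFn]
  simp [Fin.last, Nat.one_le_iff_ne_zero.2 hn.ne']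

variable [Fintype α]

open Classical in
noncomputable def incompleteWords (L : Set (List α)) (m : ℕ) : Finset (Fin m → α) :=
  Finset.univ.filter fun v => List.ofFn v ∈ L ∧ ¬ IsCompleteWord (List.ofFn v)

theorem mem_incompleteWords {L : Set (List α)} {m : ℕ} {v : Fin m → α} :
    v ∈ incompleteWords L m ↔ List.ofFn v ∈ L ∧ ¬ IsCompleteWord (List.ofFn v) := by
  simp [incompleteWords]

noncomputable def incompleteFrequency (L : Set (List α)) (m : ℕ) : ℝ :=
  (incompleteWords L m).card / complexity L m

theorem incompleteFrequency_nonneg (L : Set (List α)) (m : ℕ) : 0 ≤ incompleteFrequency L m :=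
  div_nonneg (Nat.cast_nonneg _) (Nat.cast_nonneg _)

theorem card_complete_div_card_eq_one_sub_incompleteFrequency (L : Set (List α)) {m : ℕ}
    (hm : 0 < complexity L m) :
    (Nat.card {v : Fin m → α // List.ofFn v ∈ L ∧ IsCompleteWord (List.ofFn v)} : ℝ) /
      Nat.card {v : Fin m → α // List.ofFn v ∈ L} = 1 - incompleteFrequency L m := by
  classical
  have hsplit : Nat.card {v : Fin m → α // List.ofFn v ∈ L ∧ IsCompleteWord (List.ofFn v)} +
      (incompleteWords L m).card = complexity L m := by
    simp only [complexity, incompleteWords, Nat.card_eq_fintype_card, Fintype.card_subtype]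
    rw [← Finset.card_filter_add_card_filter_not (s := Finset.univ.filter (List.ofFn · ∈ L))
      (fun v => IsCompleteWord (List.ofFn v)), Finset.filter_filter, Finset.filter_filter]
  rw [incompleteFrequency, complexity, eq_sub_iff_add_eq, ← add_div,
    div_eq_one_iff_eq (Nat.cast_ne_zero.2 hm.ne')]
  exact_mod_cast hsplit

end Words

section Substitution

open List

variable {𝒜 : Type*} {σ : 𝒜 → List 𝒜} {ℓ R : ℕ}

theorem substIter_succ (n : ℕ) (a : 𝒜) : substIter σ (n + 1) a = (σ a).flatMap (substIter σ n) :=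
  rfl

theorem substIter_add (m n : ℕ) (a : 𝒜) :
    substIter σ (m + n) a = (substIter σ m a).flatMap (substIter σ n) := by
  induction m generalizing a with
  | zero => simp [substIter]
  | succ m ih =>
    rw [Nat.add_right_comm, substIter_succ, substIter_succ, flatMap_assoc]
    exact congrArg (flatMap · (σ a)) (funext ih)

theorem length_substIter (hℓ : ∀ a, (σ a).length = ℓ) (n : ℕ) (a : 𝒜) :
    (substIter σ n a).length = ℓ ^ n := by
  induction n generalizing a with
  | zero => simp [substIter]
  | succ n ih => rw [substIter_succ, length_flatMap_of_length_eq fun b _ => ih b, hℓ, pow_succ]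

theorem mem_substLanguage_of_infix {w u : List 𝒜} (h : w <:+: u) (hu : u ∈ substLanguage σ) :
    w ∈ substLanguage σ := by
  obtain ⟨n, hn, a, ha⟩ := hu
  exact ⟨n, hn, a, h.trans ha⟩

theorem substIter_mem_substLanguage {n : ℕ} (hn : 1 ≤ n) (a : 𝒜) :
    substIter σ n a ∈ substLanguage σ :=
  ⟨n, hn, a, infix_refl _⟩

theorem IsPrimitiveSubst.ne_nil (hσ : IsPrimitiveSubst σ) (a : 𝒜) : σ a ≠ [] := by
  obtain ⟨p, hp, h⟩ := hσ
  obtain ⟨p, rfl⟩ := Nat.exists_eq_add_of_le' hp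
  intro hnil
  simpa [substIter_succ, hnil] using h a a

theorem infix_substIter_succ (hne : ∀ a, σ a ≠ []) {w : List 𝒜} {n : ℕ}
    (h : ∀ b, w <:+: substIter σ n b) (d : 𝒜) : w <:+: substIter σ (n + 1) d := by
  obtain ⟨b, hb⟩ := exists_mem_of_ne_nil _ (hne d)
  exact (h b).trans (infix_of_mem_flatten (mem_map_of_mem hb))

theorem IsPrimitiveSubst.eventually_infix_substIter (hσ : IsPrimitiveSubst σ) {w : List 𝒜}
    (hw : w ∈ substLanguage σ) : ∀ᶠ n in atTop, ∀ d, w <:+: substIter σ n d := by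
  have hne := hσ.ne_nil
  obtain ⟨n, -, a, ha⟩ := hw
  obtain ⟨p, -, hp⟩ := hσ
  refine eventually_atTop.2 ⟨p + n, fun N hN => ?_⟩
  induction N, hN using Nat.le_induction with
  | base =>
    intro d
    rw [substIter_add]
    exact ha.trans (infix_of_mem_flatten (mem_map_of_mem (hp d a)))
  | succ N _ ih => exact infix_substIter_succ hne ih

theorem IsPrimitiveSubst.exists_infix_substIter_of_length_le [Finite 𝒜] (hσ : IsPrimitiveSubst σ)
    (k : ℕ) : ∃ N, ∀ v ∈ substLanguage σ, v.length ≤ k → ∀ d, v <:+: substIter σ N d := by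
  have hfin : {v | v ∈ substLanguage σ ∧ v.length ≤ k}.Finite :=
    (finite_length_le 𝒜 k).subset fun v hv => hv.2
  obtain ⟨N, hN⟩ := (hfin.eventually_all.2 fun v hv => hσ.eventually_infix_substIter hv.1).exists
  exact ⟨N, fun v hv hvk => hN v ⟨hv, hvk⟩⟩

theorem IsPrimitiveSubst.exists_infix_flatMap_substIter (hσ : IsPrimitiveSubst σ)
    (hℓ : ∀ a, (σ a).length = ℓ) {w : List 𝒜} (hw : w ∈ substLanguage σ) {k : ℕ}
    (hwk : w.length ≤ ℓ ^ k) :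
    ∃ v ∈ substLanguage σ, v.length ≤ 2 ∧ w <:+: v.flatMap (substIter σ k) := by
  have ⟨_, _, a, _⟩ := hw
  obtain ⟨t, hwt, hkt⟩ :=
    ((hσ.eventually_infix_substIter hw).and (eventually_ge_atTop (k + 1))).exists
  have hwa := hwt a
  rw [← Nat.sub_add_cancel (show k ≤ t by omega), substIter_add] at hwa
  obtain ⟨i, hi⟩ := hwa.exists_infix_flatMap_take_two (fun b _ => length_substIter hℓ k b) hwk
  exact ⟨_, mem_substLanguage_of_infix (take_drop_infix _ _ _)
    (substIter_mem_substLanguage (by omega) a), length_take_le _ _, hi⟩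

theorem exists_substIter_infix_of_two_mul_pow_le (hℓ : ∀ a, (σ a).length = ℓ) (hℓ0 : 0 < ℓ)
    {u : List 𝒜} (hu : u ∈ substLanguage σ) {k : ℕ} (hlen : 2 * ℓ ^ k ≤ u.length) :
    ∃ b, substIter σ k b <:+: u := by
  obtain ⟨n, -, a, ha⟩ := hu
  have hkn : k ≤ n := by
    by_contra! h
    have h1 := ha.length_le
    rw [length_substIter hℓ] at h1
    have := Nat.pow_le_pow_right hℓ0 h.le
    have := pow_pos hℓ0 k
    omega
  rw [← Nat.sub_add_cancel hkn, substIter_add] at ha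
  obtain ⟨b, -, hb⟩ := ha.exists_infix_of_two_mul_le_length (fun b _ => length_substIter hℓ k b)
    (pow_pos hℓ0 k) hlen
  exact ⟨b, hb⟩

theorem IsPrimitiveSubst.exists_isLinearlyRecurrent [Finite 𝒜] (hσ : IsPrimitiveSubst σ)
    (hℓ : ∀ a, (σ a).length = ℓ) (hℓ2 : 2 ≤ ℓ) :
    ∃ R, 0 < R ∧ IsLinearlyRecurrent (substLanguage σ) R := by
  obtain ⟨N, hN⟩ := hσ.exists_infix_substIter_of_length_le 2
  refine ⟨2 * ℓ ^ (N + 1), by positivity, fun w hw u hu hlen => ?_⟩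
  rcases eq_or_ne w [] with rfl | hw0
  · exact nil_infix
  obtain ⟨k, hk1, hk2⟩ := Nat.exists_le_pow_le_mul hℓ2 (length_pos_iff.2 hw0)
  obtain ⟨v, hv, hv2, hwv⟩ := hσ.exists_infix_flatMap_substIter hℓ hw hk1
  obtain ⟨b, hb⟩ := exists_substIter_infix_of_two_mul_pow_le hℓ (by omega) hu (k := N + k) <|
    calc 2 * ℓ ^ (N + k) = 2 * ℓ ^ N * ℓ ^ k := by ring
      _ ≤ 2 * ℓ ^ N * (ℓ * w.length) := Nat.mul_le_mul_left _ hk2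
      _ = 2 * ℓ ^ (N + 1) * w.length := by ring
      _ ≤ u.length := hlen
  rw [substIter_add] at hb
  exact hwv.trans (((hN v hv hv2 b).flatMap _).trans hb)

theorem IsPrimitiveSubst.exists_complexity_le_mul [Finite 𝒜] (hσ : IsPrimitiveSubst σ)
    (hℓ : ∀ a, (σ a).length = ℓ) (hℓ2 : 2 ≤ ℓ) :
    ∃ C, ∀ m, 0 < m → complexity (substLanguage σ) m ≤ C * m := by
  have : Finite {v : List 𝒜 // v.length ≤ 2} := (finite_length_le 𝒜 2).to_subtype
  refine ⟨Nat.card {v : List 𝒜 // v.length ≤ 2} * (2 * ℓ), fun m hm => ?_⟩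
  obtain ⟨k, hk1, hk2⟩ := Nat.exists_le_pow_le_mul hℓ2 hm
  have hcode : ∀ u : {u : Fin m → 𝒜 // ofFn u ∈ substLanguage σ},
      ∃ (v : {v : List 𝒜 // v.length ≤ 2}) (j : Fin (2 * ℓ * m)),
        ofFn u.1 = ((v.1.flatMap (substIter σ k)).drop j).take m := by
    rintro ⟨u, hu⟩
    obtain ⟨v, -, hv2, huv⟩ := hσ.exists_infix_flatMap_substIter hℓ hu (by simpa using hk1)
    obtain ⟨j, hj, hju⟩ := huv.exists_eq_take_drop
    rw [length_flatMap_of_length_eq (fun b _ => length_substIter hℓ k b), length_ofFn] at hj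
    rw [length_ofFn] at hju
    refine ⟨⟨v, hv2⟩, ⟨j, ?_⟩, hju⟩
    have := Nat.mul_le_mul_left (ℓ ^ k) hv2
    have := Nat.mul_le_mul_left 2 hk2
    rw [mul_assoc]
    omega
  choose v j hvj using hcode
  have hinj : Function.Injective fun u => (v u, j u) := by
    intro u u' h
    simp only [Prod.mk.injEq] at h
    exact Subtype.ext (ofFn_injective (by rw [hvj, hvj, h.1, h.2]))
  calc complexity _ m ≤ Nat.card ({v : List 𝒜 // v.length ≤ 2} × Fin (2 * ℓ * m)) :=
        Nat.card_le_card_of_injective _ hinj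
    _ = _ := by rw [Nat.card_prod, Nat.card_fin]; ring

theorem two_le_of_substSubshift_nonempty (hℓ : ∀ a, (σ a).length = ℓ)
    (hX : (substSubshift σ).Nonempty) : 2 ≤ ℓ := by
  obtain ⟨x, hx⟩ := hX
  obtain ⟨n, -, a, ha⟩ := hx 0 2
  have h := ha.length_le
  rw [length_substIter hℓ, show (subwordAt x 0 2).length = 2 by simp [subwordAt]] at h
  by_contra! hℓ1
  have := pow_le_one₀ (Nat.zero_le ℓ) (show ℓ ≤ 1 by omega) (n := n)
  omega

theorem exists_mem_substLanguage_length_eq [Nonempty 𝒜] (hℓ : ∀ a, (σ a).length = ℓ)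
    (hℓ2 : 2 ≤ ℓ) (m : ℕ) : ∃ w ∈ substLanguage σ, w.length = m := by
  obtain ⟨a⟩ := ‹Nonempty 𝒜›
  refine ⟨(substIter σ (m + 1) a).take m, mem_substLanguage_of_infix (take_prefix _ _).isInfix
    (substIter_mem_substLanguage (by omega) a), ?_⟩
  rw [length_take, length_substIter hℓ, min_eq_left]
  exact (Nat.lt_pow_self (by omega)).le.trans (Nat.pow_le_pow_right (by omega) (by omega))

theorem IsLinearlyRecurrent.isExtendable (hR : IsLinearlyRecurrent (substLanguage σ) R)
    (hex : ∀ m, ∃ w ∈ substLanguage σ, w.length = m) : IsExtendable (substLanguage σ) := by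
  intro w hw
  obtain ⟨u, hu, hlen⟩ := hex (R * w.length + 1)
  constructor
  · obtain ⟨s, t, hst⟩ := hR w hw _ (mem_substLanguage_of_infix (take_prefix _ _).isInfix hu)
      (show _ ≤ (u.take (R * w.length)).length by simp [hlen])
    obtain ⟨b, hb⟩ := length_eq_one_iff.1 (show (u.drop (R * w.length)).length = 1 by simp [hlen])
    obtain ⟨c, t', hct⟩ := exists_cons_of_ne_nil (show t ++ [b] ≠ [] by simp)
    refine ⟨c, mem_substLanguage_of_infix ⟨s, t', ?_⟩ hu⟩
    rw [← take_append_drop (R * w.length) u, ← hst, hb]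
    simp [← hct]
  · obtain ⟨s, t, hst⟩ := hR w hw _ (mem_substLanguage_of_infix (drop_suffix _ _).isInfix hu)
      (show _ ≤ (u.drop 1).length by simp [hlen])
    obtain ⟨b, u', rfl⟩ := exists_cons_of_ne_nil (show u ≠ [] by rintro rfl; simp at hlen)
    obtain ⟨s', c, hsc⟩ := ((b :: s).eq_nil_or_concat').resolve_left (by simp)
    refine ⟨c, mem_substLanguage_of_infix ⟨s', t, ?_⟩ hu⟩
    simp only [drop_succ_cons, drop_zero] at hst
    rw [← hst, ← cons_append, ← cons_append, hsc]
    simp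

end Substitution

section Subshift

open List

def window {α : Type*} (x : ℤ → α) (i : ℤ) (m : ℕ) : Fin m → α := fun j => x (i + (j : ℤ))

theorem init_window {α : Type*} (x : ℤ → α) (i : ℤ) (m : ℕ) :
    Fin.init (window x i (m + 1)) = window x i m :=
  rfl

theorem tail_window {α : Type*} (x : ℤ → α) (i : ℤ) (m : ℕ) :
    Fin.tail (window x i (m + 1)) = window x (i + 1) m := by
  funext j
  simp only [Fin.tail, window, Fin.val_succ]
  congr 1
  push_cast
  ring

variable {𝒜 : Type*} {σ : 𝒜 → List 𝒜} {R : ℕ}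

theorem injOn_init_and_injOn_tail_of_complexity_succ_le [Finite 𝒜]
    (hext : IsExtendable (substLanguage σ)) {m : ℕ}
    (hm : complexity (substLanguage σ) (m + 1) ≤ complexity (substLanguage σ) m) :
    {v : Fin (m + 1) → 𝒜 | ofFn v ∈ substLanguage σ}.InjOn Fin.init ∧
      {v : Fin (m + 1) → 𝒜 | ofFn v ∈ substLanguage σ}.InjOn Fin.tail := by
  let init : {v : Fin (m + 1) → 𝒜 // ofFn v ∈ substLanguage σ} →
      {v : Fin m → 𝒜 // ofFn v ∈ substLanguage σ} := fun v =>
    ⟨Fin.init v.1, mem_substLanguage_of_infix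
      (by rw [ofFn_succ' v.1, concat_eq_append]; exact (prefix_append _ _).isInfix) v.2⟩
  let tail : {v : Fin (m + 1) → 𝒜 // ofFn v ∈ substLanguage σ} →
      {v : Fin m → 𝒜 // ofFn v ∈ substLanguage σ} := fun v =>
    ⟨Fin.tail v.1,
      mem_substLanguage_of_infix (by rw [ofFn_succ]; exact (suffix_cons _ _).isInfix) v.2⟩
  have hinit : Function.Surjective init := fun ⟨v, hv⟩ => by
    obtain ⟨a, ha⟩ := (hext _ hv).1
    exact ⟨⟨Fin.snoc v a, by rwa [ofFn_snoc]⟩, Subtype.ext (Fin.init_snoc (α := fun _ => 𝒜) a v)⟩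
  have htail : Function.Surjective tail := fun ⟨v, hv⟩ => by
    obtain ⟨a, ha⟩ := (hext _ hv).2
    exact ⟨⟨Fin.cons a v, by rwa [ofFn_cons]⟩, Subtype.ext (Fin.tail_cons (α := fun _ => 𝒜) a v)⟩
  have hcard : Nat.card {v : Fin (m + 1) → 𝒜 // ofFn v ∈ substLanguage σ} =
      Nat.card {v : Fin m → 𝒜 // ofFn v ∈ substLanguage σ} :=
    le_antisymm hm (Nat.card_le_card_of_surjective init hinit)
  have hinit_inj := ((Nat.bijective_iff_surjective_and_card init).2 ⟨hinit, hcard⟩).1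
  have htail_inj := ((Nat.bijective_iff_surjective_and_card tail).2 ⟨htail, hcard⟩).1
  exact ⟨fun u hu v hv h => congrArg Subtype.val
      (hinit_inj (a₁ := ⟨u, hu⟩) (a₂ := ⟨v, hv⟩) (Subtype.ext h)),
    fun u hu v hv h => congrArg Subtype.val
      (htail_inj (a₁ := ⟨u, hu⟩) (a₂ := ⟨v, hv⟩) (Subtype.ext h))⟩

/-- Morse–Hedlund: when no word of length `m` has two extensions, a point of `X_σ` is determined
by its coordinates in `[0, m)`. -/
theorem finite_substSubshift_of_complexity_succ_le [Finite 𝒜]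
    (hext : IsExtendable (substLanguage σ)) {m : ℕ}
    (hm : complexity (substLanguage σ) (m + 1) ≤ complexity (substLanguage σ) m) :
    (substSubshift σ).Finite := by
  obtain ⟨hinit, htail⟩ := injOn_init_and_injOn_tail_of_complexity_succ_le hext hm
  refine Set.Finite.of_finite_image (f := fun x => window x 0 m) (Set.toFinite _) ?_
  intro x hx y hy h0
  have hw : ∀ z ∈ substSubshift σ, ∀ i,
      window z i (m + 1) ∈ {v : Fin (m + 1) → 𝒜 | ofFn v ∈ substLanguage σ} :=
    fun z hz i => hz i (m + 1)
  have hright : ∀ i, window x i m = window y i m → window x i (m + 1) = window y i (m + 1) :=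
    fun i h => hinit (hw x hx i) (hw y hy i) h
  have hall : ∀ i, window x i m = window y i m := by
    intro i
    induction i using Int.induction_on with
    | zero => exact h0
    | succ i ih => simpa [tail_window] using congrArg Fin.tail (hright _ ih)
    | pred i ih =>
      have h := htail (hw x hx (-i - 1)) (hw y hy (-i - 1))
        (by rwa [tail_window, tail_window, sub_add_cancel])
      simpa [init_window] using congrArg Fin.init h
  funext i
  simpa [window] using congrFun (hright i (hall i)) 0

theorem IsLinearlyRecurrent.succ_le_complexity [Finite 𝒜]
    (hR : IsLinearlyRecurrent (substLanguage σ) R)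
    (hex : ∀ m, ∃ w ∈ substLanguage σ, w.length = m) (hinf : (substSubshift σ).Infinite) (m : ℕ) :
    m + 1 ≤ complexity (substLanguage σ) m := by
  induction m with
  | zero =>
    obtain ⟨w, hw, hw0⟩ := hex 0
    rw [length_eq_zero_iff] at hw0
    subst hw0
    have : Nonempty {v : Fin 0 → 𝒜 // ofFn v ∈ substLanguage σ} :=
      ⟨⟨Fin.elim0, by simpa using hw⟩⟩
    exact Nat.card_pos
  | succ m ih =>
    have : complexity (substLanguage σ) m < complexity (substLanguage σ) (m + 1) :=
      lt_of_not_ge fun h =>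
        hinf (finite_substSubshift_of_complexity_succ_le (hR.isExtendable hex) h)
    omega

end Subshift

section RigidSequences

variable {X : Type*} [MeasurableSpace X] {μ : Measure X} [IsFiniteMeasure μ] {T : X → X}

theorem le_liminf_measure_inter_iff {A : Set X} {B : ℕ → Set X} (hB : ∀ k, MeasurableSet (B k)) :
    μ A ≤ liminf (fun k => μ (A ∩ B k)) atTop ↔ Tendsto (fun k => μ (A \ B k)) atTop (𝓝 0) := by
  have hsplit k := measure_inter_add_sdiff (μ := μ) A (hB k)
  have hA : μ A ≠ ⊤ := measure_ne_top μ A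
  constructor
  · intro h
    have hinter : Tendsto (fun k => μ (A ∩ B k)) atTop (𝓝 (μ A)) :=
      tendsto_of_le_liminf_of_limsup_le h (limsup_le_of_le (by isBoundedDefault)
        (Eventually.of_forall fun k => measure_mono inter_subset_left))
    have := ENNReal.Tendsto.sub tendsto_const_nhds hinter (Or.inl hA)
    rw [tsub_self] at this
    refine this.congr fun k => ?_
    rw [← hsplit k, ENNReal.add_sub_cancel_left (measure_ne_top μ _)]
  · intro h
    have := ENNReal.Tendsto.sub tendsto_const_nhds h (Or.inl hA)
    rw [tsub_zero] at this
    refine (Tendsto.liminf_eq (this.congr fun k => ?_)).ge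
    rw [← hsplit k, ENNReal.add_sub_cancel_right (measure_ne_top μ _)]

theorem isPartiallyRigidSeq_one_iff (hT : Measurable T) {n : ℕ → ℕ} :
    IsPartiallyRigidSeq μ T 1 n ↔ StrictMono n ∧ 0 < n 0 ∧
      ∀ A, MeasurableSet A → Tendsto (fun k => μ (A \ T^[n k] ⁻¹' A)) atTop (𝓝 0) := by
  simp only [IsPartiallyRigidSeq, ENNReal.ofReal_one, one_mul]
  exact and_congr_right' <| and_congr_right' <| forall₂_congr fun A hA =>
    le_liminf_measure_inter_iff fun k => hT.iterate (n k) hA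

/-- `A ↦ μ (A ∆ T⁻ⁿ A)` is `2`-Lipschitz for the distance `μ (A ∆ B)`, in which `C` is dense. -/
theorem tendsto_measure_symmDiff_preimage_of_isSetRing (hT : MeasurePreserving T μ μ)
    {C : Set (Set X)} (hC : IsSetRing C)
    (h'C : ∃ D : Set (Set X), D.Countable ∧ D ⊆ C ∧ μ (⋃₀ D)ᶜ = 0)
    (hgen : ‹MeasurableSpace X› = MeasurableSpace.generateFrom C) {n : ℕ → ℕ}
    (hn : ∀ t ∈ C, Tendsto (fun k => μ (t ∆ (T^[n k] ⁻¹' t))) atTop (𝓝 0))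
    {A : Set X} (hA : MeasurableSet A) :
    Tendsto (fun k => μ (A ∆ (T^[n k] ⁻¹' A))) atTop (𝓝 0) := by
  rw [ENNReal.tendsto_nhds_zero]
  intro ε hε
  have hε3 : 0 < ε / 3 := ENNReal.div_pos hε.ne' (by norm_num)
  obtain ⟨t, htC, ht⟩ := exists_measure_symmDiff_lt_of_generateFrom_isSetRing hC h'C hgen hA hε3
  have htA : MeasurableSet (t ∆ A) :=
    (hgen ▸ MeasurableSpace.measurableSet_generateFrom htC : MeasurableSet t).symmDiff hA
  filter_upwards [ENNReal.tendsto_nhds_zero.1 (hn t htC) _ hε3] with k hk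
  calc μ (A ∆ (T^[n k] ⁻¹' A))
      ≤ μ (A ∆ t) + (μ (t ∆ (T^[n k] ⁻¹' t)) + μ ((T^[n k] ⁻¹' t) ∆ (T^[n k] ⁻¹' A))) :=
        (measure_symmDiff_le _ t _).trans (by gcongr; exact measure_symmDiff_le _ _ _)
    _ = μ (t ∆ A) + μ (t ∆ (T^[n k] ⁻¹' t)) + μ (t ∆ A) := by
        rw [← Set.preimage_symmDiff, (hT.iterate (n k)).measure_preimage htA.nullMeasurableSet,
          symmDiff_comm A t, add_assoc]
    _ ≤ ε / 3 + ε / 3 + ε / 3 := by gcongr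
    _ = ε := ENNReal.add_thirds ε

end RigidSequences

section ShiftSpace

variable {α : Type*}

theorem shiftMap_iterate_apply (n : ℕ) (x : ℤ → α) (k : ℤ) : shiftMap^[n] x k = x (k + n) := by
  induction n generalizing x with
  | zero => simp
  | succ n ih =>
    rw [Function.iterate_succ_apply, ih, shiftMap]
    push_cast
    ring_nf

theorem window_shiftMap_iterate (n : ℕ) (x : ℤ → α) (i : ℤ) (m : ℕ) :
    window (shiftMap^[n] x) i m = window x (i + n) m := by
  funext j
  simp only [window, shiftMap_iterate_apply]
  ring_nf

def wordCylinder {m : ℕ} (v : Fin m → α) : Set (ℤ → α) := {x | window x 0 m = v}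

def mismatchSet (i : ℤ) (n : ℕ) : Set (ℤ → α) := {x | x i ≠ x (i + n)}

theorem preimage_mismatchSet (t : ℕ) (i : ℤ) (n : ℕ) :
    shiftMap^[t] ⁻¹' mismatchSet i n = mismatchSet (α := α) (i + t) n := by
  ext x
  simp only [mismatchSet, Set.mem_preimage, Set.mem_ofPred_eq, shiftMap_iterate_apply]
  ring_nf

theorem mismatchSet_eq_biUnion [Fintype α] [DecidableEq α] (n : ℕ) :
    mismatchSet (α := α) 0 n =
      ⋃ v ∈ Finset.univ.filter (fun v : Fin (n + 1) → α => v 0 ≠ v (Fin.last n)),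
        wordCylinder v := by
  ext x
  simp [mismatchSet, wordCylinder, window]

variable [MeasurableSpace α] [MeasurableSingletonClass α]

theorem measurableSet_wordCylinder {m : ℕ} (v : Fin m → α) : MeasurableSet (wordCylinder v) :=
  (measurable_pi_lambda (window · 0 m) fun _ => measurable_pi_apply _) (measurableSet_singleton v)

variable [Countable α]

theorem measurableSet_mismatchSet (i : ℤ) (n : ℕ) : MeasurableSet (mismatchSet (α := α) i n) :=
  (measurableSet_eq_fun (measurable_pi_apply i) (measurable_pi_apply (i + n))).compl

theorem measurableSet_substSubshift (σ : α → List α) : MeasurableSet (substSubshift σ) := by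
  have : substSubshift σ =
      ⋂ (i : ℤ) (m : ℕ), (window · i m) ⁻¹' {v | List.ofFn v ∈ substLanguage σ} := by
    ext
    simp only [Set.mem_iInter, Set.mem_preimage, Set.mem_ofPred_eq]
    rfl
  rw [this]
  exact .iInter fun i => .iInter fun m =>
    (measurable_pi_lambda _ fun _ => measurable_pi_apply _) (Set.to_countable _).measurableSet

variable {μ : Measure (ℤ → α)}

theorem measure_mismatchSet (hμ : MeasurePreserving shiftMap μ μ) (i : ℤ) (n : ℕ) :
    μ (mismatchSet i n) = μ (mismatchSet 0 n) := by
  obtain ⟨t, rfl | rfl⟩ := Int.eq_nat_or_neg i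
  · rw [← zero_add (t : ℤ), ← preimage_mismatchSet,
      (hμ.iterate t).measure_preimage (measurableSet_mismatchSet _ _).nullMeasurableSet]
  · rw [← (hμ.iterate t).measure_preimage (measurableSet_mismatchSet _ _).nullMeasurableSet,
      preimage_mismatchSet, neg_add_cancel]

theorem measure_cylinder_symmDiff_preimage_le (hμ : MeasurePreserving shiftMap μ μ)
    (s : Finset ℤ) (S : Set (s → α)) (n : ℕ) :
    μ (cylinder s S ∆ (shiftMap^[n] ⁻¹' cylinder s S)) ≤ s.card * μ (mismatchSet 0 n) := by
  calc μ (cylinder s S ∆ (shiftMap^[n] ⁻¹' cylinder s S))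
      ≤ μ (⋃ i ∈ s, mismatchSet i n) := measure_mono fun x hx => ?_
    _ ≤ ∑ i ∈ s, μ (mismatchSet i n) := measure_biUnion_finset_le _ _
    _ = s.card * μ (mismatchSet 0 n) := by simp [measure_mismatchSet hμ]
  by_contra hnot
  simp only [Set.mem_iUnion, mismatchSet, Set.mem_ofPred_eq, not_exists, not_not] at hnot
  have : s.restrict (shiftMap^[n] x) = s.restrict x :=
    funext fun i => by simp [shiftMap_iterate_apply, ← hnot i i.2]
  simp [Set.mem_symmDiff, this] at hx

theorem tendsto_measure_sdiff_preimage_iff [Finite α] [IsFiniteMeasure μ]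
    (hμ : MeasurePreserving shiftMap μ μ) {n : ℕ → ℕ} :
    (∀ A, MeasurableSet A → Tendsto (fun k => μ (A \ shiftMap^[n k] ⁻¹' A)) atTop (𝓝 0)) ↔
      Tendsto (fun k => μ (mismatchSet 0 (n k))) atTop (𝓝 0) := by
  have := Fintype.ofFinite α
  constructor
  · intro h
    have hsub t : mismatchSet (α := α) 0 t ⊆
        ⋃ a, (· 0) ⁻¹' {a} \ shiftMap^[t] ⁻¹' ((· 0) ⁻¹' {a}) := fun x hx =>
      Set.mem_iUnion.2 ⟨x 0, rfl, by simpa [mismatchSet, shiftMap_iterate_apply, eq_comm] using hx⟩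
    have hsum := tendsto_finsetSum Finset.univ fun a _ =>
      h _ (measurable_pi_apply 0 (measurableSet_singleton a))
    rw [Finset.sum_const_zero] at hsum
    exact tendsto_of_tendsto_of_tendsto_of_le_of_le tendsto_const_nhds hsum (fun _ => zero_le)
      fun k => (measure_mono (hsub _)).trans (measure_iUnion_fintype_le μ _)
  · intro h A hA
    have hcyl : ∀ t ∈ measurableCylinders fun _ : ℤ => α,
        Tendsto (fun k => μ (t ∆ (shiftMap^[n k] ⁻¹' t))) atTop (𝓝 0) := by
      intro t ht
      obtain ⟨s, S, -, rfl⟩ := (mem_measurableCylinders t).1 ht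
      have := ENNReal.Tendsto.const_mul h (Or.inr (ENNReal.natCast_ne_top s.card))
      rw [mul_zero] at this
      exact tendsto_of_tendsto_of_tendsto_of_le_of_le tendsto_const_nhds this (fun _ => zero_le)
        fun k => measure_cylinder_symmDiff_preimage_le hμ s S (n k)
    exact tendsto_of_tendsto_of_tendsto_of_le_of_le tendsto_const_nhds
      (tendsto_measure_symmDiff_preimage_of_isSetRing hμ isSetRing_measurableCylinders
        ⟨{Set.univ}, Set.countable_singleton _,
          Set.singleton_subset_iff.2 (univ_mem_measurableCylinders _), by simp⟩
        generateFrom_measurableCylinders.symm hcyl hA)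
      (fun _ => zero_le) fun k => measure_mono le_sup_left

theorem isPartiallyRigid_one_iff_mapClusterPt [Finite α] [IsFiniteMeasure μ]
    (hμ : MeasurePreserving shiftMap μ μ) :
    IsPartiallyRigid μ shiftMap 1 ↔ MapClusterPt 0 atTop fun n => μ.real (mismatchSet 0 n) := by
  rw [← exists_strictMono_tendsto_iff_mapClusterPt]
  refine exists_congr fun n => ?_
  rw [isPartiallyRigidSeq_one_iff hμ.measurable, tendsto_measure_sdiff_preimage_iff hμ,
    ← ENNReal.tendsto_toReal_iff (fun _ => measure_ne_top _ _) ENNReal.zero_ne_top,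
    ENNReal.toReal_zero]
  rfl

end ShiftSpace

section CylinderMeasure

variable {α : Type*} [MeasurableSpace α] [MeasurableSingletonClass α] {μ : Measure (ℤ → α)}
  [IsProbabilityMeasure μ] {σ : α → List α} {R : ℕ}

theorem natCast_mul_measureReal_wordCylinder_le (hμ : MeasurePreserving shiftMap μ μ) {m g : ℕ}
    {v : Fin m → α} (hv : ∀ d, 0 < d → d < g → ¬ HasPeriod v d) :
    g * μ.real (wordCylinder v) ≤ 1 := by
  have hdisj : (Finset.range g : Set ℕ).PairwiseDisjoint
      fun j => shiftMap^[j] ⁻¹' wordCylinder v := by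
    intro j hj j' hj' hne
    wlog hlt : j < j' generalizing j j'
    · exact (this hj' hj hne.symm (by omega)).symm
    refine Set.disjoint_left.2 fun x hx hx' => hv (j' - j) (by omega) (by simp at hj'; omega)
      fun i i' hii' => ?_
    have e : ∀ (k : ℕ) (y : Fin m), window (shiftMap^[k] x) 0 m y = x (y + k) := fun k y => by
      simp [window, shiftMap_iterate_apply]
    rw [← congrFun (show window (shiftMap^[j'] x) 0 m = v from hx') i,
      ← congrFun (show window (shiftMap^[j] x) 0 m = v from hx) i', e, e]
    congr 1
    omega
  calc (g : ℝ) * μ.real (wordCylinder v)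
      = ∑ j ∈ Finset.range g, μ.real (shiftMap^[j] ⁻¹' wordCylinder v) := by
        simp [(hμ.iterate _).measureReal_preimage (measurableSet_wordCylinder v).nullMeasurableSet]
    _ = μ.real (⋃ j ∈ Finset.range g, shiftMap^[j] ⁻¹' wordCylinder v) :=
        (measureReal_biUnion_finset hdisj fun j _ =>
          (hμ.iterate j).measurable (measurableSet_wordCylinder v)).symm
    _ ≤ 1 := measureReal_le_one

theorem natCast_mul_measureReal_wordCylinder_le_two_mul {L : Set (List α)}
    (hμ : MeasurePreserving shiftMap μ μ) (hR : IsLinearlyRecurrent L R) (hR0 : 0 < R)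
    (hP : ∀ d, d < complexity L (d + 1)) {m : ℕ} {v : Fin m → α} (hv : List.ofFn v ∈ L) :
    m * μ.real (wordCylinder v) ≤ 2 * R := by
  have hg := natCast_mul_measureReal_wordCylinder_le hμ (g := m / R) fun d hd0 hdg =>
    hR.not_hasPeriod hd0 (hP d) hv ((Nat.mul_le_mul_left R hdg).trans (Nat.mul_div_le m R))
  have hm : (m : ℝ) ≤ R * (m / R : ℕ) + R := by
    have := Nat.lt_mul_div_succ m hR0
    rw [mul_add, mul_one] at this
    exact_mod_cast this.le
  have h1 : μ.real (wordCylinder v) ≤ 1 := measureReal_le_one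
  have h0 : 0 ≤ μ.real (wordCylinder v) := measureReal_nonneg
  nlinarith

theorem one_le_mul_measureReal_wordCylinder (hμ : MeasurePreserving shiftMap μ μ)
    (hsupp : μ (substSubshift σ) = 1) (hR : IsLinearlyRecurrent (substLanguage σ) R) {m : ℕ}
    (hm : 0 < m) {v : Fin m → α} (hv : List.ofFn v ∈ substLanguage σ) :
    1 ≤ (R * m : ℕ) * μ.real (wordCylinder v) := by
  have hcover :
      substSubshift σ ⊆ ⋃ j ∈ Finset.range (R * m), shiftMap^[j] ⁻¹' wordCylinder v := by
    intro x hx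
    obtain ⟨j, hj, hjv⟩ := List.exists_shift_of_ofFn_infix_ofFn
      (hR _ hv (List.ofFn (window x 0 (R * m))) (hx 0 (R * m)) (by simp))
    refine Set.mem_biUnion (x := j) (Finset.mem_range.2 (by omega)) (funext fun k => ?_)
    rw [window_shiftMap_iterate, ← hjv k]
    simp only [window]
    push_cast
    ring_nf
  calc (1 : ℝ) = μ.real (substSubshift σ) := by rw [measureReal_def, hsupp, ENNReal.toReal_one]
    _ ≤ μ.real (⋃ j ∈ Finset.range (R * m), shiftMap^[j] ⁻¹' wordCylinder v) :=
        measureReal_mono hcover (measure_ne_top μ _)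
    _ ≤ ∑ j ∈ Finset.range (R * m), μ.real (shiftMap^[j] ⁻¹' wordCylinder v) :=
        measureReal_biUnion_finset_le _ _
    _ = (R * m : ℕ) * μ.real (wordCylinder v) := by
        simp [(hμ.iterate _).measureReal_preimage (measurableSet_wordCylinder v).nullMeasurableSet]

theorem measureReal_wordCylinder_eq_zero [Countable α] (hsupp : μ (substSubshift σ) = 1)
    {m : ℕ} {v : Fin m → α} (hv : List.ofFn v ∉ substLanguage σ) :
    μ.real (wordCylinder v) = 0 := by
  have hnull : μ (substSubshift σ)ᶜ = 0 :=
    (prob_compl_eq_zero_iff (measurableSet_substSubshift σ)).2 hsupp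
  have hsub : wordCylinder v ⊆ (substSubshift σ)ᶜ := fun x hx hxX => hv <| by
    rw [← show window x 0 m = v from hx]
    exact hxX 0 m
  rw [measureReal_def, measure_mono_null hsub hnull, ENNReal.toReal_zero]

theorem measureReal_mismatchSet_eq_sum [Fintype α] (hsupp : μ (substSubshift σ) = 1) {n : ℕ}
    (hn : 0 < n) :
    μ.real (mismatchSet 0 n) =
      ∑ v ∈ incompleteWords (substLanguage σ) (n + 1), μ.real (wordCylinder v) := by
  classical
  rw [mismatchSet_eq_biUnion, measureReal_biUnion_finset
    (fun v _ v' _ h => Set.disjoint_left.2 fun x hx hx' => h (hx.symm.trans hx'))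
    fun v _ => measurableSet_wordCylinder v]
  refine (Finset.sum_subset (fun v hv => ?_) fun v hv hv' =>
    measureReal_wordCylinder_eq_zero hsupp ?_).symm
  · rw [mem_incompleteWords, isCompleteWord_ofFn_iff hn] at hv
    simpa using hv.2
  · rw [mem_incompleteWords, isCompleteWord_ofFn_iff hn] at hv'
    simp only [Finset.mem_filter, Finset.mem_univ, true_and] at hv
    exact fun h => hv' ⟨h, hv⟩

variable [Fintype α] {C n : ℕ}

theorem incompleteFrequency_le_mul_measureReal_mismatchSet (hμ : MeasurePreserving shiftMap μ μ)
    (hsupp : μ (substSubshift σ) = 1) (hR : IsLinearlyRecurrent (substLanguage σ) R)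
    (hP : n + 1 ≤ complexity (substLanguage σ) (n + 1)) (hn : 0 < n) :
    incompleteFrequency (substLanguage σ) (n + 1) ≤ R * μ.real (mismatchSet 0 n) := by
  have hcount : ((incompleteWords (substLanguage σ) (n + 1)).card : ℝ) ≤
      (R * (n + 1) : ℕ) * μ.real (mismatchSet 0 n) := by
    rw [measureReal_mismatchSet_eq_sum hsupp hn, Finset.mul_sum, Finset.card_eq_sum_ones,
      Nat.cast_sum, Nat.cast_one]
    exact Finset.sum_le_sum fun v hv =>
      one_le_mul_measureReal_wordCylinder hμ hsupp hR n.succ_pos (mem_incompleteWords.1 hv).1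
  have hP' : (n + 1 : ℝ) ≤ complexity (substLanguage σ) (n + 1) := by exact_mod_cast hP
  have h0 : 0 ≤ μ.real (mismatchSet 0 n) := measureReal_nonneg
  rw [incompleteFrequency, div_le_iff₀ (by linarith)]
  push_cast at hcount
  nlinarith

theorem measureReal_mismatchSet_le_mul_incompleteFrequency (hμ : MeasurePreserving shiftMap μ μ)
    (hsupp : μ (substSubshift σ) = 1) (hR : IsLinearlyRecurrent (substLanguage σ) R) (hR0 : 0 < R)
    (hP : ∀ d, d < complexity (substLanguage σ) (d + 1))
    (hC : complexity (substLanguage σ) (n + 1) ≤ C * (n + 1)) (hn : 0 < n) :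
    μ.real (mismatchSet 0 n) ≤ 2 * R * C * incompleteFrequency (substLanguage σ) (n + 1) := by
  have hcount : (n + 1 : ℕ) * μ.real (mismatchSet 0 n) ≤
      2 * R * (incompleteWords (substLanguage σ) (n + 1)).card := by
    rw [measureReal_mismatchSet_eq_sum hsupp hn, Finset.mul_sum, Finset.card_eq_sum_ones,
      Nat.cast_sum, Finset.mul_sum]
    exact Finset.sum_le_sum fun v hv => by
      simpa using natCast_mul_measureReal_wordCylinder_le_two_mul hμ hR hR0 hP
        (mem_incompleteWords.1 hv).1
  have hpos : (0 : ℝ) < complexity (substLanguage σ) (n + 1) :=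
    Nat.cast_pos.2 (Nat.zero_lt_of_lt (hP n))
  have hC' : (complexity (substLanguage σ) (n + 1) : ℝ) ≤ C * (n + 1) := by exact_mod_cast hC
  have h0 : 0 ≤ μ.real (mismatchSet 0 n) := measureReal_nonneg
  rw [incompleteFrequency, mul_div_assoc', le_div_iff₀ hpos]
  push_cast at hcount
  nlinarith

end CylinderMeasure

/-- A primitive constant length substitution subshift (infinite, with its unique
invariant measure `μ`) is rigid if and only if
`limsup_m q_{X_σ}(m) / p_{X_σ}(m) = 1`, where `p` counts words and `q` counts complete
words of length `m` in the language. -/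
theorem constantLength_substitution_rigid_iff_complete_words
    {𝒜 : Type} [Fintype 𝒜] [Nonempty 𝒜]
    [MeasurableSpace 𝒜] [DiscreteMeasurableSpace 𝒜]
    (σ : 𝒜 → List 𝒜)
    (hprim : IsPrimitiveSubst σ)
    (hcl : IsConstantLengthSubst σ)
    (hinf : (substSubshift σ).Infinite)
    (μ : Measure (ℤ → 𝒜)) [IsProbabilityMeasure μ]
    (herg : Ergodic shiftMap μ)
    (hsupp : μ (substSubshift σ) = 1) :
    IsPartiallyRigid μ shiftMap 1 ↔
      Filter.limsup (fun m =>
        ((Nat.card {v : Fin m → 𝒜 //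
            List.ofFn v ∈ substLanguage σ ∧ IsCompleteWord (List.ofFn v)} : ℝ) /
          (Nat.card {v : Fin m → 𝒜 // List.ofFn v ∈ substLanguage σ} : ℝ)))
        Filter.atTop = 1 := by
  obtain ⟨ℓ, -, hℓ⟩ := hcl
  have hℓ2 := two_le_of_substSubshift_nonempty hℓ hinf.nonempty
  obtain ⟨R, hR0, hR⟩ := hprim.exists_isLinearlyRecurrent hℓ hℓ2
  obtain ⟨C, hC⟩ := hprim.exists_complexity_le_mul hℓ hℓ2
  have hP := hR.succ_le_complexity (exists_mem_substLanguage_length_eq hℓ hℓ2) hinf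
  have hμ := herg.toMeasurePreserving
  have hq m := card_complete_div_card_eq_one_sub_incompleteFrequency (substLanguage σ)
    ((hP m).trans_lt' m.succ_pos)
  have he := incompleteFrequency_nonneg (substLanguage σ)
  rw [isPartiallyRigid_one_iff_mapClusterPt hμ,
    limsup_eq_iff_mapClusterPt (.of_forall fun m => by rw [hq]; linarith [he m])
      (isBoundedUnder_of ⟨0, fun m => by positivity⟩)]
  simp only [hq, mapClusterPt_const_sub_iff]
  refine Iff.trans ?_ (mapClusterPt_comp_add_iff 1)
  have hn : ∀ᶠ n in atTop, 0 < n := eventually_gt_atTop 0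
  exact ⟨fun h => h.zero_of_le_mul (.of_forall fun n => he _) (hn.mono fun n =>
      incompleteFrequency_le_mul_measureReal_mismatchSet hμ hsupp hR ((hP _).trans' (by omega))),
    fun h => h.zero_of_le_mul (.of_forall fun n => measureReal_nonneg) (hn.mono fun n =>
      measureReal_mismatchSet_le_mul_incompleteFrequency hμ hsupp hR hR0
        (fun d => (hP (d + 1)).trans_lt' (by omega)) (hC _ n.succ_pos))⟩
end
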